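/- arXiv:2406.10404 — 11 statements merged into one kernel-verified Lean document; each statement's English description precedes it below -/
import Mathlib

section
/- Let k, x, b be positive integers and a a nonnegative integer with k = a + b and x ≥ a. Then C(2k, k) ≤ C(2a, a) * C(x + 2b, b). -/
open Nat

lemma fact_ineq_aux (a b : ℕ) :
    (2*a+2*b)! * ((a)! * (a)! * (b)!) ≤ (2*a)! * ((a+2*b)! * (a+b)!) := by
  induction b with
  | zero => simp [Nat.mul_comm, Nat.mul_assoc]
  | succ b ih =>
    have h1 : (2*a+2*(b+1))! = (2*a+2*b+2) * ((2*a+2*b+1) * (2*a+2*b)!) := by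
      have : 2*a+2*(b+1) = (2*a+2*b+1) + 1 := by ring
      rw [this, factorial_succ, factorial_succ]
    have h2 : (a+2*(b+1))! = (a+2*b+2) * ((a+2*b+1) * (a+2*b)!) := by
      have : a+2*(b+1) = (a+2*b+1) + 1 := by ring
      rw [this, factorial_succ, factorial_succ]
    have h3 : (a+(b+1))! = (a+b+1) * (a+b)! := by
      have : a+(b+1) = (a+b) + 1 := by ring
      rw [this, factorial_succ]
    have h4 : (b+1)! = (b+1) * (b)! := factorial_succ b
    rw [h1, h2, h3, h4]
    have key : (2*a+2*b+2) * (2*a+2*b+1) * (b+1) ≤ (a+2*b+2) * (a+2*b+1) * (a+b+1) := by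
      rcases a with _ | c
      · nlinarith
      · nlinarith [Nat.zero_le c, Nat.zero_le b, Nat.mul_le_mul_left (c*(c+1)) (Nat.zero_le 1)]
    calc (2*a+2*b+2) * ((2*a+2*b+1) * (2*a+2*b)!) * ((a)! * (a)! * ((b+1) * (b)!))
        = ((2*a+2*b+2) * (2*a+2*b+1) * (b+1)) * ((2*a+2*b)! * ((a)! * (a)! * (b)!)) := by ring
      _ ≤ ((a+2*b+2) * (a+2*b+1) * (a+b+1)) * ((2*a)! * ((a+2*b)! * (a+b)!)) :=
          Nat.mul_le_mul key ih
      _ = (2*a)! * ((a+2*b+2) * ((a+2*b+1) * (a+2*b)!) * ((a+b+1) * (a+b)!)) := by ring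

theorem stmt_1 (k x b a : ℕ) (hk : 0 < k) (hx : 0 < x) (hb : 0 < b)
    (hkab : k = a + b) (hxa : x ≥ a) :
    Nat.choose (2 * k) k ≤ Nat.choose (2 * a) a * Nat.choose (x + 2 * b) b := by
  subst hkab
  have step1 : Nat.choose (2*(a+b)) (a+b) ≤ Nat.choose (2*a) a * Nat.choose (a+2*b) b := by
    have e1 : Nat.choose (2*(a+b)) (a+b) * ((a+b)! * (a+b)!) = (2*(a+b))! := by
      have := Nat.choose_mul_factorial_mul_factorial (n := 2*(a+b)) (k := a+b)
        (by omega)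
      simpa [show 2*(a+b) - (a+b) = a+b by omega, mul_assoc] using this
    have e2 : Nat.choose (2*a) a * ((a)! * (a)!) = (2*a)! := by
      have := Nat.choose_mul_factorial_mul_factorial (n := 2*a) (k := a) (by omega)
      simpa [show 2*a - a = a by omega, mul_assoc] using this
    have e3 : Nat.choose (a+2*b) b * ((b)! * (a+b)!) = (a+2*b)! := by
      have := Nat.choose_mul_factorial_mul_factorial (n := a+2*b) (k := b) (by omega)
      simpa [show a+2*b - b = a+b by omega, mul_assoc] using this
    have key := fact_ineq_aux a b
    have h2ab : 2*(a+b) = 2*a+2*b := by ring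
    rw [h2ab] at e1
    have pos : 0 < (a+b)! * (a+b)! * ((a)! * (a)! * (b)!) :=
      by positivity
    refine Nat.le_of_mul_le_mul_right ?_ pos
    calc Nat.choose (2*(a+b)) (a+b) * ((a+b)! * (a+b)! * ((a)! * (a)! * (b)!))
        = (Nat.choose (2*(a+b)) (a+b) * ((a+b)! * (a+b)!)) * ((a)! * (a)! * (b)!) := by ring
      _ = (2*a+2*b)! * ((a)! * (a)! * (b)!) := by rw [h2ab, e1]
      _ ≤ (2*a)! * ((a+2*b)! * (a+b)!) := key
      _ = (Nat.choose (2*a) a * ((a)! * (a)!)) * ((Nat.choose (a+2*b) b * ((b)! * (a+b)!)) * (a+b)!) := by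
          rw [e2, e3]
      _ = Nat.choose (2*a) a * Nat.choose (a+2*b) b * ((a+b)! * (a+b)! * ((a)! * (a)! * (b)!)) := by ring
  have step2 : Nat.choose (a+2*b) b ≤ Nat.choose (x+2*b) b :=
    Nat.choose_le_choose b (by omega)
  calc Nat.choose (2*(a+b)) (a+b) ≤ Nat.choose (2*a) a * Nat.choose (a+2*b) b := step1
    _ ≤ Nat.choose (2*a) a * Nat.choose (x+2*b) b := Nat.mul_le_mul_left _ step2
end

section
/- Let k, b be positive integers and a a nonnegative integer with k = a + b and 1 < a < k. Then C(2a, a) * C(a + 2b, b) > C(2k, k). -/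
open Nat

lemma fact_key (b : ℕ) (hb : 1 ≤ b) :
    ∀ a, 2 ≤ a → a ! * a ! * b ! * (2*a+2*b)! < (2*a)! * (a+2*b)! * (a+b)! := by
  intro a ha
  induction a, ha using Nat.le_induction with
  | base =>
      have e1 : (2*2+2*b)! = (2*b+4)*((2*b+3)*(2+2*b)!) := by
        rw [show 2*2+2*b = (2+2*b)+1+1 by ring, Nat.factorial_succ, Nat.factorial_succ]
        ring
      have e2 : (2+b)! = (b+2)*((b+1)*b !) := by
        rw [show 2+b = b+1+1 by ring, Nat.factorial_succ, Nat.factorial_succ]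
      rw [e1, e2]
      have h2 : (2:ℕ)! = 2 := rfl
      have h4 : (2*2:ℕ)! = 24 := rfl
      rw [h2, h4]
      have hP : 0 < b ! * (2+2*b)! := by positivity
      have hc : 2*2*((2*b+4)*(2*b+3)) < 24*((b+2)*(b+1)) := by nlinarith
      calc 2*2*b ! * ((2*b+4)*((2*b+3)*(2+2*b)!))
          = (2*2*((2*b+4)*(2*b+3))) * (b ! * (2+2*b)!) := by ring
        _ < (24*((b+2)*(b+1))) * (b ! * (2+2*b)!) :=
            Nat.mul_lt_mul_of_lt_of_le hc le_rfl hP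
        _ = 24 * (2+2*b)! * ((b+2)*((b+1)*b !)) := by ring
  | succ a ha ih =>
      rw [show 2*(a+1)+2*b = (2*a+2*b)+1+1 by ring,
          show 2*(a+1) = (2*a)+1+1 by ring,
          show (a+1)+2*b = (a+2*b)+1 by ring,
          show (a+1)+b = (a+b)+1 by ring,
          Nat.factorial_succ ((2*a+2*b)+1), Nat.factorial_succ (2*a+2*b),
          Nat.factorial_succ ((2*a)+1), Nat.factorial_succ (2*a),
          Nat.factorial_succ (a+2*b), Nat.factorial_succ (a+b),
          Nat.factorial_succ a]
      have hred : (a+1)*(2*a+2*b+1) ≤ (2*a+1)*(a+2*b+1) := by nlinarith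
      have hmul : (a+1)*(a+1)*((2*a+2*b+1+1)*(2*a+2*b+1)) ≤
          (2*a+1+1)*(2*a+1)*((a+2*b+1)*(a+b+1)) := by
        calc (a+1)*(a+1)*((2*a+2*b+1+1)*(2*a+2*b+1))
            = (2*(a+1)*(a+b+1)) * ((a+1)*(2*a+2*b+1)) := by ring
          _ ≤ (2*(a+1)*(a+b+1)) * ((2*a+1)*(a+2*b+1)) := Nat.mul_le_mul le_rfl hred
          _ = (2*a+1+1)*(2*a+1)*((a+2*b+1)*(a+b+1)) := by ring
      have hmLpos : 0 < (a+1)*(a+1)*((2*a+2*b+1+1)*(2*a+2*b+1)) := by positivity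
      calc (a+1)*a ! * ((a+1)*a !) * b ! * ((2*a+2*b+1+1)*((2*a+2*b+1)*(2*a+2*b)!))
          = (a ! * a ! * b ! * (2*a+2*b)!) *
              ((a+1)*(a+1)*((2*a+2*b+1+1)*(2*a+2*b+1))) := by ring
        _ < ((2*a)! * (a+2*b)! * (a+b)!) *
              ((a+1)*(a+1)*((2*a+2*b+1+1)*(2*a+2*b+1))) :=
            Nat.mul_lt_mul_of_lt_of_le ih le_rfl hmLpos
        _ ≤ ((2*a)! * (a+2*b)! * (a+b)!) *
              ((2*a+1+1)*(2*a+1)*((a+2*b+1)*(a+b+1))) := Nat.mul_le_mul le_rfl hmul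
        _ = (2*a+1+1)*((2*a+1)*(2*a)!) * ((a+2*b+1)*(a+2*b)!) * ((a+b+1)*(a+b)!) := by
            ring

theorem stmt_2 (k b a : ℕ) (hk : 0 < k) (hb : 0 < b) (hkab : k = a + b)
    (ha1 : 1 < a) (hak : a < k) :
    Nat.choose (2 * a) a * Nat.choose (a + 2 * b) b > Nat.choose (2 * k) k := by
  subst hkab
  rw [show 2*(a+b) = 2*a+2*b by ring]
  have key := fact_key b hb a ha1
  have e1 : Nat.choose (2*a) a * a ! * a ! = (2*a)! := by
    have := Nat.choose_mul_factorial_mul_factorial (n := 2*a) (k := a) (by omega)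
    simpa [show 2*a - a = a by omega] using this
  have e2 : Nat.choose (a+2*b) b * b ! * (a+b)! = (a+2*b)! := by
    have := Nat.choose_mul_factorial_mul_factorial (n := a+2*b) (k := b) (by omega)
    simpa [show a+2*b - b = a+b by omega] using this
  have e3 : Nat.choose (2*a+2*b) (a+b) * (a+b)! * (a+b)! = (2*a+2*b)! := by
    have := Nat.choose_mul_factorial_mul_factorial (n := 2*a+2*b) (k := a+b) (by omega)
    simpa [show 2*a+2*b - (a+b) = a+b by omega] using this
  set X := Nat.choose (2*a) a
  set Y := Nat.choose (a+2*b) b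
  set Z := Nat.choose (2*a+2*b) (a+b)
  rw [← e1, ← e2, ← e3] at key
  have hC : 0 < a ! * a ! * b ! * ((a+b)! * (a+b)!) := by positivity
  have h : Z * (a ! * a ! * b ! * ((a+b)! * (a+b)!)) <
      X * Y * (a ! * a ! * b ! * ((a+b)! * (a+b)!)) := by
    calc Z * (a ! * a ! * b ! * ((a+b)! * (a+b)!))
        = a ! * a ! * b ! * (Z * (a+b)! * (a+b)!) := by ring
      _ < X * a ! * a ! * (Y * b ! * (a+b)!) * (a+b)! := key
      _ = X * Y * (a ! * a ! * b ! * ((a+b)! * (a+b)!)) := by ring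
  exact lt_of_mul_lt_mul_right h (le_of_lt hC)
end

section
/- Let k, a, b be positive integers with k = a + b and 4 < 2a ≤ k. Then C(2k, k) ≠ C(2a, a) * C(a + 2b - 1, b). -/
lemma keyA (r s : ℕ) : Nat.choose (r+s+1) r * (s+1) = (r+s+1) * Nat.choose (r+s) r := by
  have e2 := Nat.choose_succ_right_eq (r+s+1) r
  have e3 := Nat.add_one_mul_choose_eq (r+s) r
  have h : r + s + 1 - r = s + 1 := by omega
  rw [h] at e2
  rw [e2] at e3
  exact e3.symm

lemma key2' (r s n : ℕ) (h : n = r + s) :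
    Nat.choose (n+2) (r+1) * ((r+1)*(s+1)) = Nat.choose n r * ((n+1)*(n+2)) := by
  subst h
  have h1 := Nat.add_one_mul_choose_eq (r+s+1) r
  simp only [Nat.succ_eq_add_one, show r+s+1+1 = r+s+2 from rfl] at h1
  have h2 := keyA r s
  calc Nat.choose (r+s+2) (r+1) * ((r+1)*(s+1))
      = (Nat.choose (r+s+2) (r+1) * (r+1)) * (s+1) := by ring
    _ = ((r+s+2) * Nat.choose (r+s+1) r) * (s+1) := by rw [← h1]
    _ = (r+s+2) * (Nat.choose (r+s+1) r * (s+1)) := by ring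
    _ = (r+s+2) * ((r+s+1) * Nat.choose (r+s) r) := by rw [h2]
    _ = Nat.choose (r+s) r * ((r+s+1)*(r+s+2)) := by ring

lemma key3' (r s n : ℕ) (h : n = r + s) :
    Nat.choose (n+3) (r+1) * ((r+1)*((s+1)*(s+2))) = Nat.choose n r * ((n+1)*((n+2)*(n+3))) := by
  subst h
  have h1 := Nat.add_one_mul_choose_eq (r+s+2) r
  simp only [Nat.succ_eq_add_one, show r+s+2+1 = r+s+3 from rfl] at h1
  have h2 := keyA r (s+1)
  simp only [show r+(s+1)+1 = r+s+2 from rfl, show r+(s+1) = r+s+1 from rfl] at h2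
  have h3 := keyA r s
  calc Nat.choose (r+s+3) (r+1) * ((r+1)*((s+1)*(s+2)))
      = (Nat.choose (r+s+3) (r+1) * (r+1)) * ((s+1)*(s+2)) := by ring
    _ = ((r+s+3) * Nat.choose (r+s+2) r) * ((s+1)*(s+2)) := by rw [← h1]
    _ = (r+s+3) * ((Nat.choose (r+s+2) r * (s+2)) * (s+1)) := by ring
    _ = (r+s+3) * (((r+s+2) * Nat.choose (r+s+1) r) * (s+1)) := by rw [h2]
    _ = ((r+s+3)*(r+s+2)) * (Nat.choose (r+s+1) r * (s+1)) := by ring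
    _ = ((r+s+3)*(r+s+2)) * ((r+s+1) * Nat.choose (r+s) r) := by rw [h3]
    _ = Nat.choose (r+s) r * ((r+s+1)*((r+s+2)*(r+s+3))) := by ring

lemma lemB (a : ℕ) (ha : 3 ≤ a) :
    Nat.choose (4*a) (2*a) < Nat.choose (2*a) a * Nat.choose (3*a-1) a := by
  induction a, ha using Nat.le_induction with
  | base => decide
  | succ a ha IH =>
    rw [show 4*(a+1) = 4*a+4 by ring, show 2*(a+1) = 2*a+2 by ring,
        show 3*(a+1)-1 = 3*a+2 by omega]
    have f1 : Nat.choose (4*a+2) (2*a+1) * ((2*a+1)*(2*a+1))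
        = Nat.choose (4*a) (2*a) * ((4*a+1)*(4*a+2)) := key2' (2*a) (2*a) (4*a) (by ring)
    have f2 : Nat.choose (4*a+4) (2*a+2) * ((2*a+2)*(2*a+2))
        = Nat.choose (4*a+2) (2*a+1) * ((4*a+3)*(4*a+4)) := by
      have h := key2' (2*a+1) (2*a+1) (4*a+2) (by ring)
      rw [show 4*a+2+2 = 4*a+4 by omega, show 2*a+1+1 = 2*a+2 by omega,
          show 4*a+2+1 = 4*a+3 by omega] at h
      exact h
    have f3 : Nat.choose (2*a+2) (a+1) * ((a+1)*(a+1))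
        = Nat.choose (2*a) a * ((2*a+1)*(2*a+2)) := key2' a a (2*a) (by ring)
    obtain ⟨q, hq⟩ : ∃ q, a = q+2 := ⟨a-2, by omega⟩
    have f4 : Nat.choose (3*a+2) (a+1) * ((a+1)*((2*a)*(2*a+1)))
        = Nat.choose (3*a-1) a * ((3*a)*((3*a+1)*(3*a+2))) := by
      have h := key3' a (2*q+3) (3*a-1) (by omega)
      rw [show 3*a-1+3 = 3*a+2 by omega, show 2*q+3+1 = 2*a by omega,
          show 2*q+3+2 = 2*a+1 by omega, show 3*a-1+1 = 3*a by omega,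
          show 3*a-1+2 = 3*a+1 by omega] at h
      exact h
    have hpoly : ((4*a+1)*(4*a+2))*((4*a+3)*(4*a+4))*(((a+1)*(a+1))*((a+1)*((2*a)*(2*a+1))))
        ≤ (((2*a+1)*(2*a+2))*((3*a)*((3*a+1)*(3*a+2))))*(((2*a+1)*(2*a+1))*((2*a+2)*(2*a+2))) := by
      obtain ⟨c, rfl⟩ : ∃ c, a = c+3 := ⟨a-3, by omega⟩
      have key : ((4*(c+3)+1)*(4*(c+3)+2))*((4*(c+3)+3)*(4*(c+3)+4))*((((c+3)+1)*((c+3)+1))*(((c+3)+1)*((2*(c+3))*(2*(c+3)+1))))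
          + (56448000+145867008*c+167236928*c^2+111654576*c^3+47840072*c^4+13641968*c^5+2589032*c^6+315344*c^7+22368*c^8+704*c^9)
          = (((2*(c+3)+1)*(2*(c+3)+2))*((3*(c+3))*((3*(c+3)+1)*(3*(c+3)+2))))*(((2*(c+3)+1)*(2*(c+3)+1))*((2*(c+3)+2)*(2*(c+3)+2))) := by ring
      nlinarith [key, Nat.zero_le (c^2), Nat.zero_le (c^3), Nat.zero_le (c^4),
        Nat.zero_le (c^5), Nat.zero_le (c^6), Nat.zero_le (c^7), Nat.zero_le (c^8),
        Nat.zero_le (c^9)]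
    apply Nat.lt_of_mul_lt_mul_left
      (a := (((2*a+1)*(2*a+1))*((2*a+2)*(2*a+2))) * (((a+1)*(a+1))*((a+1)*((2*a)*(2*a+1)))))
    calc (((2*a+1)*(2*a+1))*((2*a+2)*(2*a+2))) * (((a+1)*(a+1))*((a+1)*((2*a)*(2*a+1))))
          * Nat.choose (4*a+4) (2*a+2)
        = (Nat.choose (4*a+4) (2*a+2) * ((2*a+2)*(2*a+2))) * (((2*a+1)*(2*a+1))
            * (((a+1)*(a+1))*((a+1)*((2*a)*(2*a+1))))) := by ring
      _ = (Nat.choose (4*a+2) (2*a+1) * ((4*a+3)*(4*a+4))) * (((2*a+1)*(2*a+1))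
            * (((a+1)*(a+1))*((a+1)*((2*a)*(2*a+1))))) := by rw [f2]
      _ = (Nat.choose (4*a+2) (2*a+1) * ((2*a+1)*(2*a+1))) * (((4*a+3)*(4*a+4))
            * (((a+1)*(a+1))*((a+1)*((2*a)*(2*a+1))))) := by ring
      _ = (Nat.choose (4*a) (2*a) * ((4*a+1)*(4*a+2))) * (((4*a+3)*(4*a+4))
            * (((a+1)*(a+1))*((a+1)*((2*a)*(2*a+1))))) := by rw [f1]
      _ = Nat.choose (4*a) (2*a)
            * (((4*a+1)*(4*a+2))*((4*a+3)*(4*a+4))*(((a+1)*(a+1))*((a+1)*((2*a)*(2*a+1))))) := by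
          ring
      _ < (Nat.choose (2*a) a * Nat.choose (3*a-1) a)
            * (((4*a+1)*(4*a+2))*((4*a+3)*(4*a+4))*(((a+1)*(a+1))*((a+1)*((2*a)*(2*a+1))))) := by
          apply Nat.mul_lt_mul_of_lt_of_le IH (le_refl _)
          positivity
      _ ≤ (Nat.choose (2*a) a * Nat.choose (3*a-1) a)
            * ((((2*a+1)*(2*a+2))*((3*a)*((3*a+1)*(3*a+2))))*(((2*a+1)*(2*a+1))*((2*a+2)*(2*a+2)))) :=
          Nat.mul_le_mul_left _ hpoly
      _ = ((Nat.choose (2*a) a * ((2*a+1)*(2*a+2))) * (Nat.choose (3*a-1) a * ((3*a)*((3*a+1)*(3*a+2)))))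
            * (((2*a+1)*(2*a+1))*((2*a+2)*(2*a+2))) := by ring
      _ = ((Nat.choose (2*a+2) (a+1) * ((a+1)*(a+1))) * (Nat.choose (3*a+2) (a+1) * ((a+1)*((2*a)*(2*a+1)))))
            * (((2*a+1)*(2*a+1))*((2*a+2)*(2*a+2))) := by rw [f3, f4]
      _ = (((2*a+1)*(2*a+1))*((2*a+2)*(2*a+2))) * (((a+1)*(a+1))*((a+1)*((2*a)*(2*a+1))))
            * (Nat.choose (2*a+2) (a+1) * Nat.choose (3*a+2) (a+1)) := by ring

lemma lemC (a b : ℕ) (ha : 3 ≤ a) (hab : a ≤ b) :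
    Nat.choose (2*(a+b)) (a+b) < Nat.choose (2*a) a * Nat.choose (a+2*b-1) b := by
  induction b, hab using Nat.le_induction with
  | base =>
    rw [show 2*(a+a) = 4*a by ring, show a+a = 2*a by ring, show a+2*a-1 = 3*a-1 by omega]
    exact lemB a ha
  | succ b hb IH =>
    rw [show 2*(a+(b+1)) = 2*(a+b)+2 by ring, show a+(b+1) = (a+b)+1 by ring,
        show a+2*(b+1)-1 = a+2*b+1 by omega]
    have e1 : Nat.choose (2*(a+b)+2) ((a+b)+1) * (((a+b)+1)*((a+b)+1))
        = Nat.choose (2*(a+b)) (a+b) * ((2*(a+b)+1)*(2*(a+b)+2)) :=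
      key2' (a+b) (a+b) (2*(a+b)) (by ring)
    obtain ⟨p, hp⟩ : ∃ p, a = p + 1 := ⟨a-1, by omega⟩
    have e2 : Nat.choose (a+2*b+1) (b+1) * ((b+1)*(a+b))
        = Nat.choose (a+2*b-1) b * ((a+2*b)*(a+2*b+1)) := by
      have h := key2' b (p+b) (p+2*b) (by omega)
      rw [show p+2*b+2 = a+2*b+1 by omega, show p+2*b+1 = a+2*b by omega,
          show p+b+1 = a+b by omega, show p+2*b = a+2*b-1 by omega] at h
      exact h
    have hpoly : ((2*(a+b)+1)*(2*(a+b)+2))*((b+1)*(a+b))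
        ≤ ((a+2*b)*(a+2*b+1))*(((a+b)+1)*((a+b)+1)) := by
      obtain ⟨c, rfl⟩ : ∃ c, a = c+3 := ⟨a-3, by omega⟩
      obtain ⟨d, rfl⟩ : ∃ d, b = c+3+d := ⟨b-(c+3), by omega⟩
      have key : ((2*((c+3)+(c+3+d))+1)*(2*((c+3)+(c+3+d))+2))*(((c+3+d)+1)*((c+3)+(c+3+d)))
          + (((c+3)+(c+3+d))+1)*(6+23*c+13*c^2+2*c^3+3*c*d+c^2*d)
          = (((c+3)+2*(c+3+d))*((c+3)+2*(c+3+d)+1))*((((c+3)+(c+3+d))+1)*(((c+3)+(c+3+d))+1)) := by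
        ring
      nlinarith [key, Nat.zero_le (c^2), Nat.zero_le (c^3), Nat.zero_le (c*d), Nat.zero_le (c^2*d)]
    apply Nat.lt_of_mul_lt_mul_left
      (a := (((a+b)+1)*((a+b)+1)) * ((b+1)*(a+b)))
    calc (((a+b)+1)*((a+b)+1)) * ((b+1)*(a+b)) * Nat.choose (2*(a+b)+2) ((a+b)+1)
        = (Nat.choose (2*(a+b)+2) ((a+b)+1) * (((a+b)+1)*((a+b)+1))) * ((b+1)*(a+b)) := by ring
      _ = (Nat.choose (2*(a+b)) (a+b) * ((2*(a+b)+1)*(2*(a+b)+2))) * ((b+1)*(a+b)) := by rw [e1]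
      _ = Nat.choose (2*(a+b)) (a+b) * (((2*(a+b)+1)*(2*(a+b)+2))*((b+1)*(a+b))) := by ring
      _ < (Nat.choose (2*a) a * Nat.choose (a+2*b-1) b)
            * (((2*(a+b)+1)*(2*(a+b)+2))*((b+1)*(a+b))) := by
          apply Nat.mul_lt_mul_of_lt_of_le IH (le_refl _)
          positivity
      _ ≤ (Nat.choose (2*a) a * Nat.choose (a+2*b-1) b)
            * (((a+2*b)*(a+2*b+1))*(((a+b)+1)*((a+b)+1))) := Nat.mul_le_mul_left _ hpoly
      _ = (Nat.choose (2*a) a * (Nat.choose (a+2*b-1) b * ((a+2*b)*(a+2*b+1))))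
            * (((a+b)+1)*((a+b)+1)) := by ring
      _ = (Nat.choose (2*a) a * (Nat.choose (a+2*b+1) (b+1) * ((b+1)*(a+b))))
            * (((a+b)+1)*((a+b)+1)) := by rw [e2]
      _ = (((a+b)+1)*((a+b)+1)) * ((b+1)*(a+b))
            * (Nat.choose (2*a) a * Nat.choose (a+2*b+1) (b+1)) := by ring

theorem stmt_4 (k a b : ℕ) (hk : 0 < k) (ha : 0 < a) (hb : 0 < b)
    (hkab : k = a + b) (h1 : 4 < 2 * a) (h2 : 2 * a ≤ k) :
    Nat.choose (2 * k) k ≠ Nat.choose (2 * a) a * Nat.choose (a + 2 * b - 1) b := by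
  have ha3 : 3 ≤ a := by omega
  have hab : a ≤ b := by omega
  subst hkab
  exact Nat.ne_of_lt (lemC a b ha3 hab)
end

section
/- Let k, a, b be positive integers with k = a + b and 4 < 2a ≤ k. Then C(2k, k) ≠ C(2a, a) * C(a + 2b - 2, b). -/
open Nat

-- helper: cb(b+1) = 2 * C(2b+1, b)
lemma cb_succ_eq_aux5 (b : ℕ) : Nat.centralBinom (b+1) = 2 * Nat.choose (2*b+1) b := by
  rw [Nat.centralBinom_eq_two_mul_choose]
  have h : 2*(b+1) = (2*b+1) + 1 := by ring
  rw [h, Nat.choose_succ_succ, Nat.choose_symm_half]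
  ring

-- case a = 3
lemma case3_aux5 (b : ℕ) (hb : 1 ≤ b) :
    20 * Nat.choose (2*b+1) b < Nat.centralBinom (b+3) := by
  have h1 := Nat.succ_mul_centralBinom_succ (b+2)
  have h2 := Nat.succ_mul_centralBinom_succ (b+1)
  have hcb := cb_succ_eq_aux5 b
  have key : (b+2)*(b+3) * Nat.centralBinom (b+3)
      = 8*(2*b+3)*(2*b+5) * Nat.choose (2*b+1) b := by
    calc (b+2)*(b+3) * Nat.centralBinom (b+3)
        = (b+2)*((b+3) * Nat.centralBinom (b+3)) := by ring
      _ = (b+2)*(2 * (2*(b+2)+1) * Nat.centralBinom (b+2)) := by rw [h1]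
      _ = 2*(2*(b+2)+1) * ((b+2) * Nat.centralBinom (b+2)) := by ring
      _ = 2*(2*(b+2)+1) * (2 * (2*(b+1)+1) * Nat.centralBinom (b+1)) := by rw [h2]
      _ = 2*(2*(b+2)+1) * (2 * (2*(b+1)+1) * (2 * Nat.choose (2*b+1) b)) := by rw [hcb]
      _ = 8*(2*b+3)*(2*b+5) * Nat.choose (2*b+1) b := by ring
  have hC : 0 < Nat.choose (2*b+1) b := Nat.choose_pos (by omega)
  have hlt : (b+2)*(b+3) * (20 * Nat.choose (2*b+1) b)
      < (b+2)*(b+3) * Nat.centralBinom (b+3) := by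
    rw [key]
    have hterm : 0 < b*(12*b+28) := Nat.mul_pos hb (by omega)
    have hpoly : 20*((b+2)*(b+3)) < 8*(2*b+3)*(2*b+5) := by
      have e : 8*(2*b+3)*(2*b+5) = 20*((b+2)*(b+3)) + b*(12*b+28) := by ring
      calc 20*((b+2)*(b+3)) < 20*((b+2)*(b+3)) + b*(12*b+28) :=
            Nat.lt_add_of_pos_right hterm
        _ = 8*(2*b+3)*(2*b+5) := e.symm
    calc (b+2)*(b+3) * (20 * Nat.choose (2*b+1) b)
        = (20*((b+2)*(b+3))) * Nat.choose (2*b+1) b := by ring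
      _ < (8*(2*b+3)*(2*b+5)) * Nat.choose (2*b+1) b :=
          (Nat.mul_lt_mul_right hC).mpr hpoly
  exact Nat.lt_of_mul_lt_mul_left hlt

-- base case a = 4 : cb(b+4) < 70 * C(2b+2, b), for b ≥ 1
lemma base4_aux5 (b : ℕ) (hb : 1 ≤ b) :
    Nat.centralBinom (b+4) < 70 * Nat.choose (2*b+2) b := by
  have h1 := Nat.succ_mul_centralBinom_succ (b+3)
  have h2 := Nat.succ_mul_centralBinom_succ (b+2)
  have h3 := Nat.succ_mul_centralBinom_succ (b+1)
  have h4 : Nat.centralBinom (b+1) * (b+1) = Nat.choose (2*b+2) b * (b+2) := by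
    rw [Nat.centralBinom_eq_two_mul_choose]
    have e : 2*(b+1) = 2*b+2 := by ring
    rw [e]
    have h := Nat.choose_succ_right_eq (2*b+2) b
    have e2 : 2*b+2 - b = b+2 := by omega
    rw [e2] at h
    exact h
  have key : (b+1)*(b+2)*(b+3)*(b+4) * Nat.centralBinom (b+4)
      = 8*(2*b+3)*(2*b+5)*(2*b+7)*(b+2) * Nat.choose (2*b+2) b := by
    calc (b+1)*(b+2)*(b+3)*(b+4) * Nat.centralBinom (b+4)
        = (b+1)*(b+2)*(b+3)*((b+4) * Nat.centralBinom (b+4)) := by ring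
      _ = (b+1)*(b+2)*(b+3)*(2 * (2*(b+3)+1) * Nat.centralBinom (b+3)) := by rw [h1]
      _ = 2*(2*(b+3)+1)*((b+1)*(b+2)*((b+3) * Nat.centralBinom (b+3))) := by ring
      _ = 2*(2*(b+3)+1)*((b+1)*(b+2)*(2 * (2*(b+2)+1) * Nat.centralBinom (b+2))) := by rw [h2]
      _ = 2*(2*(b+3)+1)*(2*(2*(b+2)+1))*((b+1)*((b+2) * Nat.centralBinom (b+2))) := by ring
      _ = 2*(2*(b+3)+1)*(2*(2*(b+2)+1))*((b+1)*(2 * (2*(b+1)+1) * Nat.centralBinom (b+1))) := by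
          rw [h3]
      _ = 2*(2*(b+3)+1)*(2*(2*(b+2)+1))*(2*(2*(b+1)+1))*(Nat.centralBinom (b+1) * (b+1)) := by
          ring
      _ = 2*(2*(b+3)+1)*(2*(2*(b+2)+1))*(2*(2*(b+1)+1))*(Nat.choose (2*b+2) b * (b+2)) := by
          rw [h4]
      _ = 8*(2*b+3)*(2*b+5)*(2*b+7)*(b+2) * Nat.choose (2*b+2) b := by ring
  have hC : 0 < Nat.choose (2*b+2) b := Nat.choose_pos (by omega)
  have hlt : (b+1)*(b+2)*(b+3)*(b+4) * Nat.centralBinom (b+4)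
      < (b+1)*(b+2)*(b+3)*(b+4) * (70 * Nat.choose (2*b+2) b) := by
    rw [key]
    have hterm : 0 < (b+2)*b*(6*b^2+80*b+194) :=
      Nat.mul_pos (Nat.mul_pos (by omega) hb) (by positivity)
    have hp : 8*(2*b+3)*(2*b+5)*(2*b+7)*(b+2) < (b+1)*(b+2)*(b+3)*(b+4)*70 := by
      have e : (b+1)*(b+2)*(b+3)*(b+4)*70
          = 8*(2*b+3)*(2*b+5)*(2*b+7)*(b+2) + (b+2)*b*(6*b^2+80*b+194) := by ring
      calc 8*(2*b+3)*(2*b+5)*(2*b+7)*(b+2)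
          < 8*(2*b+3)*(2*b+5)*(2*b+7)*(b+2) + (b+2)*b*(6*b^2+80*b+194) :=
            Nat.lt_add_of_pos_right hterm
        _ = (b+1)*(b+2)*(b+3)*(b+4)*70 := e.symm
    calc 8*(2*b+3)*(2*b+5)*(2*b+7)*(b+2) * Nat.choose (2*b+2) b
        < ((b+1)*(b+2)*(b+3)*(b+4)*70) * Nat.choose (2*b+2) b :=
          (Nat.mul_lt_mul_right hC).mpr hp
      _ = (b+1)*(b+2)*(b+3)*(b+4) * (70 * Nat.choose (2*b+2) b) := by ring
  exact Nat.lt_of_mul_lt_mul_left hlt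

-- main lemma for a ≥ 4: induction on c = a - 4
lemma main_ge4_aux5 (c : ℕ) : ∀ b, c + 4 ≤ b →
    Nat.centralBinom (c + 4 + b) < Nat.centralBinom (c + 4) * Nat.choose (c + 2 + 2*b) b := by
  induction c with
  | zero =>
    intro b hb
    have h := base4_aux5 b (by omega)
    have e : Nat.centralBinom 4 = 70 := by decide
    have e2 : 0 + 2 + 2*b = 2*b+2 := by ring
    have e3 : 0 + 4 + b = b + 4 := by ring
    rw [e2, e3, e]
    exact h
  | succ c ih =>
    intro b hb
    set a := c + 4 with ha
    have IH := ih b (by omega)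
    have h1 := Nat.succ_mul_centralBinom_succ (a + b)
    have h2 := Nat.succ_mul_centralBinom_succ a
    have h3 : Nat.choose (c+2+2*b) b * (c+3+2*b) = Nat.choose (c+3+2*b) b * (c+3+b) := by
      have h := Nat.choose_mul_succ_eq (c+2+2*b) b
      have e2 : c+2+2*b+1 - b = c+3+b := by omega
      rw [e2] at h
      have e : c+2+2*b+1 = c+3+2*b := by omega
      rw [e] at h
      exact h
    set A := Nat.centralBinom a with hA
    set B := Nat.choose (c+2+2*b) b with hB
    have hApos : 0 < A := Nat.centralBinom_pos a
    have hBpos : 0 < B := Nat.choose_pos (by omega)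
    have hpoly : (a+1)*(c+3+b)*(2*(a+b)+1) ≤ (a+b+1)*(2*a+1)*(c+3+2*b) := by
      rw [ha]
      have e : (c+4+b+1)*(2*(c+4)+1)*(c+3+2*b)
          = (c+4+1)*(c+3+b)*(2*((c+4)+b)+1) + 2*b*(c^2+9*c+4*b+b*c+21) := by ring
      calc (c+4+1)*(c+3+b)*(2*((c+4)+b)+1)
          ≤ (c+4+1)*(c+3+b)*(2*((c+4)+b)+1) + 2*b*(c^2+9*c+4*b+b*c+21) :=
            Nat.le_add_right _ _
        _ = (c+4+b+1)*(2*(c+4)+1)*(c+3+2*b) := e.symm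
    have hmul : (a+1)*(a+b+1)*(c+3+b) * Nat.centralBinom (a + 1 + b)
        < (a+1)*(a+b+1)*(c+3+b) * (Nat.centralBinom (a+1) * Nat.choose (c+3+2*b) b) := by
      have lhs_eq : (a+1)*(a+b+1)*(c+3+b) * Nat.centralBinom (a + 1 + b)
          = (a+1)*(c+3+b) * (2*(2*(a+b)+1)) * Nat.centralBinom (a+b) := by
        have e : a + 1 + b = (a + b) + 1 := by omega
        rw [e]
        calc (a+1)*(a+b+1)*(c+3+b) * Nat.centralBinom (a + b + 1)
            = (a+1)*(c+3+b) * ((a+b+1) * Nat.centralBinom (a+b+1)) := by ring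
          _ = (a+1)*(c+3+b) * (2 * (2*(a+b)+1) * Nat.centralBinom (a+b)) := by rw [h1]
          _ = (a+1)*(c+3+b) * (2*(2*(a+b)+1)) * Nat.centralBinom (a+b) := by ring
      have rhs_eq : (a+1)*(a+b+1)*(c+3+b) * (Nat.centralBinom (a+1) * Nat.choose (c+3+2*b) b)
          = (a+b+1) * (2*(2*a+1)) * (c+3+2*b) * (A * B) := by
        calc (a+1)*(a+b+1)*(c+3+b) * (Nat.centralBinom (a+1) * Nat.choose (c+3+2*b) b)
            = (a+b+1) * ((a+1) * Nat.centralBinom (a+1))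
                * (Nat.choose (c+3+2*b) b * (c+3+b)) := by ring
          _ = (a+b+1) * (2 * (2*a+1) * A) * (Nat.choose (c+3+2*b) b * (c+3+b)) := by rw [h2]
          _ = (a+b+1) * (2 * (2*a+1) * A) * (B * (c+3+2*b)) := by rw [← h3]
          _ = (a+b+1) * (2*(2*a+1)) * (c+3+2*b) * (A * B) := by ring
      rw [lhs_eq, rhs_eq]
      calc (a+1)*(c+3+b) * (2*(2*(a+b)+1)) * Nat.centralBinom (a+b)
          < (a+1)*(c+3+b) * (2*(2*(a+b)+1)) * (A * B) := by
            apply (Nat.mul_lt_mul_left (by positivity)).mpr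
            exact IH
        _ ≤ (a+b+1) * (2*(2*a+1)) * (c+3+2*b) * (A * B) := by
            apply Nat.mul_le_mul_right
            calc (a+1)*(c+3+b) * (2*(2*(a+b)+1))
                = 2*((a+1)*(c+3+b)*(2*(a+b)+1)) := by ring
              _ ≤ 2*((a+b+1)*(2*a+1)*(c+3+2*b)) := by omega
              _ = (a+b+1) * (2*(2*a+1)) * (c+3+2*b) := by ring
    have hfin := Nat.lt_of_mul_lt_mul_left hmul
    have e4 : c + 1 + 4 + b = a + 1 + b := by omega
    have e5 : c + 1 + 4 = a + 1 := by omega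
    have e6 : c + 1 + 2 + 2*b = c+3+2*b := by omega
    rw [e4, e5, e6]
    exact hfin

theorem stmt_5 (k a b : ℕ) (hk : 0 < k) (ha : 0 < a) (hb : 0 < b)
    (hkab : k = a + b) (h1 : 4 < 2 * a) (h2 : 2 * a ≤ k) :
    Nat.choose (2 * k) k ≠ Nat.choose (2 * a) a * Nat.choose (a + 2 * b - 2) b := by
  have ha3 : 3 ≤ a := by omega
  have hab : a ≤ b := by omega
  have hL : Nat.choose (2 * k) k = Nat.centralBinom k :=
    (Nat.centralBinom_eq_two_mul_choose k).symm
  rcases Nat.eq_or_lt_of_le ha3 with h3 | h4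
  · -- a = 3
    subst h3
    subst hkab
    have e1 : 3 + 2*b - 2 = 2*b+1 := by omega
    have e2 : Nat.choose (2*3) 3 = 20 := by decide
    have e3 : 3 + b = b + 3 := by omega
    rw [hL, e1, e2, e3]
    exact Nat.ne_of_gt (case3_aux5 b (by omega))
  · -- a ≥ 4
    have h := main_ge4_aux5 (a - 4) b (by omega)
    have e1 : a - 4 + 4 = a := by omega
    have e2 : a - 4 + 2 + 2*b = a + 2*b - 2 := by omega
    rw [e1, e2] at h
    subst hkab
    rw [hL]
    have e3 : Nat.centralBinom a = Nat.choose (2*a) a :=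
      Nat.centralBinom_eq_two_mul_choose a
    rw [e3] at h
    exact Nat.ne_of_lt h
end

section
/- Let k, a, b be positive integers with k = a + b and 4 < 2a ≤ k. Then C(2k, k) ≠ C(2a, a) * C(a + 2b - 3, b). -/
open Nat

private lemma ratL (k : ℕ) :
    (k+1) * Nat.choose (2*k+2) (k+1) = 2*(2*k+1) * Nat.choose (2*k) k := by
  have h := Nat.succ_mul_centralBinom_succ k
  unfold Nat.centralBinom at h
  rw [show 2*(k+1) = 2*k+2 by ring] at h
  exact h

private lemma ratR (t B : ℕ) :
    Nat.choose (t+2*B+2) (B+1) * ((B+1) * (t+B+1))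
      = ((t+2*B+2) * (t+2*B+1)) * Nat.choose (t+2*B) B := by
  have h1 := Nat.choose_mul_succ_eq (t+2*B) B
  rw [show t+2*B+1 - B = t+B+1 by omega] at h1
  have h2 := Nat.add_one_mul_choose_eq (t+2*B+1) B
  rw [show t+2*B+1+1 = t+2*B+2 by ring] at h2
  calc Nat.choose (t+2*B+2) (B+1) * ((B+1) * (t+B+1))
      = (Nat.choose (t+2*B+2) (B+1) * (B+1)) * (t+B+1) := by ring
    _ = ((t+2*B+2) * Nat.choose (t+2*B+1) B) * (t+B+1) := by rw [← h2]
    _ = (t+2*B+2) * (Nat.choose (t+2*B+1) B * (t+B+1)) := by ring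
    _ = (t+2*B+2) * (Nat.choose (t+2*B) B * (t+2*B+1)) := by rw [← h1]
    _ = _ := by ring

private lemma ratR3 (t : ℕ) :
    Nat.choose (3*t+9) (t+4) * ((t+4) * ((2*t+4) * (2*t+5)))
      = ((3*t+9) * ((3*t+8) * (3*t+7))) * Nat.choose (3*t+6) (t+3) := by
  have h1 := Nat.choose_mul_succ_eq (3*t+6) (t+3)
  rw [show 3*t+6+1 - (t+3) = 2*t+4 by omega, show 3*t+6+1 = 3*t+7 by ring] at h1
  have h2 := Nat.choose_mul_succ_eq (3*t+7) (t+3)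
  rw [show 3*t+7+1 - (t+3) = 2*t+5 by omega, show 3*t+7+1 = 3*t+8 by ring] at h2
  have h3 := Nat.add_one_mul_choose_eq (3*t+8) (t+3)
  rw [show 3*t+8+1 = 3*t+9 by ring, show t+3+1 = t+4 by ring] at h3
  calc Nat.choose (3*t+9) (t+4) * ((t+4) * ((2*t+4) * (2*t+5)))
      = (Nat.choose (3*t+9) (t+4) * (t+4)) * ((2*t+4) * (2*t+5)) := by ring
    _ = ((3*t+9) * Nat.choose (3*t+8) (t+3)) * ((2*t+4) * (2*t+5)) := by rw [← h3]
    _ = (3*t+9) * ((Nat.choose (3*t+8) (t+3) * (2*t+5)) * (2*t+4)) := by ring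
    _ = (3*t+9) * ((Nat.choose (3*t+7) (t+3) * (3*t+8)) * (2*t+4)) := by rw [← h2]
    _ = (3*t+9) * ((3*t+8) * (Nat.choose (3*t+7) (t+3) * (2*t+4))) := by ring
    _ = (3*t+9) * ((3*t+8) * (Nat.choose (3*t+6) (t+3) * (3*t+7))) := by rw [← h1]
    _ = _ := by ring

private lemma coefP5 (t : ℕ) :
    4*(4*t+13)*(4*t+15)*(t+4)*(t+4)*(2*t+4)*(2*t+5)
      ≤ 2*(2*t+7)*(2*t+7)*(2*t+8)*(3*t+9)*(3*t+8)*(3*t+7) := by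
  nlinarith [Nat.zero_le (t^6), Nat.zero_le (t^5), Nat.zero_le (t^4), Nat.zero_le (t^3),
    Nat.zero_le (t^2), Nat.zero_le t]

/-- base row : b = a, i.e. C(4a,2a) < C(2a,a)*C(3a-3,a), a = t+3, t ≥ 3 -/
private lemma baserow : ∀ t, 3 ≤ t →
    Nat.choose (4*t+12) (2*t+6) < Nat.choose (2*t+6) (t+3) * Nat.choose (3*t+6) (t+3) := by
  intro t ht
  induction t, ht using Nat.le_induction with
  | base =>
    have e1 : Nat.choose 24 12 = 2704156 := by
      rw [Nat.choose_eq_factorial_div_factorial (by norm_num)]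
      norm_num [Nat.factorial]
    have e2 : Nat.choose 12 6 = 924 := by
      rw [Nat.choose_eq_factorial_div_factorial (by norm_num)]
      norm_num [Nat.factorial]
    have e3 : Nat.choose 15 6 = 5005 := by
      rw [Nat.choose_eq_factorial_div_factorial (by norm_num)]
      norm_num [Nat.factorial]
    norm_num [e1, e2, e3]
  | succ t ht ih =>
    have u1 := ratL (2*t+6)
    rw [show 2*(2*t+6)+2 = 4*t+14 by ring, show 2*t+6+1 = 2*t+7 by ring,
        show 2*(2*t+6)+1 = 4*t+13 by ring, show 2*(2*t+6) = 4*t+12 by ring] at u1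
    have u2 := ratL (2*t+7)
    rw [show 2*(2*t+7)+2 = 4*t+16 by ring, show 2*t+7+1 = 2*t+8 by ring,
        show 2*(2*t+7)+1 = 4*t+15 by ring, show 2*(2*t+7) = 4*t+14 by ring] at u2
    have u3 := ratL (t+3)
    rw [show 2*(t+3)+2 = 2*t+8 by ring, show t+3+1 = t+4 by ring,
        show 2*(t+3)+1 = 2*t+7 by ring, show 2*(t+3) = 2*t+6 by ring] at u3
    have u4 := ratR3 t
    rw [show 4*(t+1)+12 = 4*t+16 by ring, show 2*(t+1)+6 = 2*t+8 by ring,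
        show (t+1)+3 = t+4 by ring, show 3*(t+1)+6 = 3*t+9 by ring]
    set X := Nat.choose (4*t+16) (2*t+8) with hX
    set Y := Nat.choose (2*t+8) (t+4) * Nat.choose (3*t+9) (t+4) with hY
    have key : X * ((2*t+7)*(2*t+8)*((t+4)*((t+4)*((2*t+4)*(2*t+5)))))
        < Y * ((2*t+7)*(2*t+8)*((t+4)*((t+4)*((2*t+4)*(2*t+5))))) := by
      calc X * ((2*t+7)*(2*t+8)*((t+4)*((t+4)*((2*t+4)*(2*t+5)))))
          = ((2*t+8) * X) * ((2*t+7)*((t+4)*((t+4)*((2*t+4)*(2*t+5))))) := by ring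
        _ = (2*(4*t+15) * Nat.choose (4*t+14) (2*t+7))
              * ((2*t+7)*((t+4)*((t+4)*((2*t+4)*(2*t+5))))) := by rw [hX, u2]
        _ = ((2*t+7) * Nat.choose (4*t+14) (2*t+7))
              * (2*(4*t+15)*((t+4)*((t+4)*((2*t+4)*(2*t+5))))) := by ring
        _ = (2*(4*t+13) * Nat.choose (4*t+12) (2*t+6))
              * (2*(4*t+15)*((t+4)*((t+4)*((2*t+4)*(2*t+5))))) := by rw [u1]
        _ = Nat.choose (4*t+12) (2*t+6)
              * (4*(4*t+13)*(4*t+15)*(t+4)*(t+4)*(2*t+4)*(2*t+5)) := by ring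
        _ ≤ Nat.choose (4*t+12) (2*t+6)
              * (2*(2*t+7)*(2*t+7)*(2*t+8)*(3*t+9)*(3*t+8)*(3*t+7)) :=
            Nat.mul_le_mul_left _ (coefP5 t)
        _ < (Nat.choose (2*t+6) (t+3) * Nat.choose (3*t+6) (t+3))
              * (2*(2*t+7)*(2*t+7)*(2*t+8)*(3*t+9)*(3*t+8)*(3*t+7)) := by
            have hpos : 0 < 2*(2*t+7)*(2*t+7)*(2*t+8)*(3*t+9)*(3*t+8)*(3*t+7) := by positivity
            exact (Nat.mul_lt_mul_right hpos).mpr ih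
        _ = ((2*(2*t+7)) * Nat.choose (2*t+6) (t+3))
              * ((((3*t+9) * ((3*t+8) * (3*t+7)))) * Nat.choose (3*t+6) (t+3))
              * ((2*t+7)*(2*t+8)) := by ring
        _ = ((t+4) * Nat.choose (2*t+8) (t+4))
              * (Nat.choose (3*t+9) (t+4) * ((t+4) * ((2*t+4) * (2*t+5))))
              * ((2*t+7)*(2*t+8)) := by rw [← u3, ← u4]
        _ = Y * ((2*t+7)*(2*t+8)*((t+4)*((t+4)*((2*t+4)*(2*t+5))))) := by rw [hY]; ring
    exact lt_of_mul_lt_mul_right key (Nat.zero_le _)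

private lemma coefP4 (t B : ℕ) (ht : 3 ≤ t) (hB : t+3 ≤ B) :
    2*(2*t+2*B+7)*((B+1)*(t+B+1)) ≤ (t+2*B+2)*(t+2*B+1)*(t+B+4) := by
  obtain ⟨s, rfl⟩ : ∃ s, t = s + 3 := ⟨t - 3, by omega⟩
  obtain ⟨u, rfl⟩ : ∃ u, B = s + 6 + u := ⟨B - (s+6), by omega⟩
  nlinarith [Nat.zero_le (s^3), Nat.zero_le (s^2*u), Nat.zero_le (s^2), Nat.zero_le (s*u),
    Nat.zero_le s, Nat.zero_le u, Nat.zero_le (s*u^2), Nat.zero_le (u^2), Nat.zero_le (u^3)]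

/-- main case a ≥ 6 : for a = t+3 (t ≥ 3) and b ≥ a,
    C(2(a+b), a+b) < C(2a, a) * C(a+2b-3, b). -/
private lemma bigcase (t : ℕ) (ht : 3 ≤ t) : ∀ B, t+3 ≤ B →
    Nat.choose (2*t+2*B+6) (t+B+3) < Nat.choose (2*t+6) (t+3) * Nat.choose (t+2*B) B := by
  intro B hB
  induction B, hB using Nat.le_induction with
  | base =>
    have h := baserow t ht
    rw [show 2*t+2*(t+3)+6 = 4*t+12 by ring, show t+(t+3)+3 = 2*t+6 by ring,
        show t+2*(t+3) = 3*t+6 by ring]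
    exact h
  | succ B hB ih =>
    have u1 := ratL (t+B+3)
    rw [show 2*(t+B+3)+2 = 2*t+2*B+8 by ring, show t+B+3+1 = t+B+4 by ring,
        show 2*(t+B+3)+1 = 2*t+2*B+7 by ring, show 2*(t+B+3) = 2*t+2*B+6 by ring] at u1
    have u2 := ratR t B
    rw [show 2*t+2*(B+1)+6 = 2*t+2*B+8 by ring, show t+(B+1)+3 = t+B+4 by ring,
        show t+2*(B+1) = t+2*B+2 by ring]
    set X := Nat.choose (2*t+2*B+8) (t+B+4) with hX
    set CA := Nat.choose (2*t+6) (t+3) with hCA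
    have key : X * ((t+B+4)*((B+1)*(t+B+1)))
        < (CA * Nat.choose (t+2*B+2) (B+1)) * ((t+B+4)*((B+1)*(t+B+1))) := by
      calc X * ((t+B+4)*((B+1)*(t+B+1)))
          = ((t+B+4) * X) * ((B+1)*(t+B+1)) := by ring
        _ = (2*(2*t+2*B+7) * Nat.choose (2*t+2*B+6) (t+B+3)) * ((B+1)*(t+B+1)) := by
            rw [hX, u1]
        _ = Nat.choose (2*t+2*B+6) (t+B+3) * (2*(2*t+2*B+7)*((B+1)*(t+B+1))) := by ring
        _ ≤ Nat.choose (2*t+2*B+6) (t+B+3) * ((t+2*B+2)*(t+2*B+1)*(t+B+4)) :=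
            Nat.mul_le_mul_left _ (coefP4 t B ht hB)
        _ < (CA * Nat.choose (t+2*B) B) * ((t+2*B+2)*(t+2*B+1)*(t+B+4)) := by
            have hpos : 0 < (t+2*B+2)*(t+2*B+1)*(t+B+4) := by positivity
            exact (Nat.mul_lt_mul_right hpos).mpr ih
        _ = CA * (((t+2*B+2) * (t+2*B+1)) * Nat.choose (t+2*B) B) * (t+B+4) := by ring
        _ = CA * (Nat.choose (t+2*B+2) (B+1) * ((B+1) * (t+B+1))) * (t+B+4) := by rw [← u2]
        _ = (CA * Nat.choose (t+2*B+2) (B+1)) * ((t+B+4)*((B+1)*(t+B+1))) := by ring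
    exact lt_of_mul_lt_mul_right key (Nat.zero_le _)

private lemma fact3 (m : ℕ) : (m+3)! = (m+3)*(m+2)*(m+1)*m ! := by
  simp [Nat.factorial_succ]; ring

private lemma fact4 (m : ℕ) : (m+4)! = (m+4)*(m+3)*(m+2)*(m+1)*m ! := by
  simp [Nat.factorial_succ]; ring

private lemma fact5 (m : ℕ) : (m+5)! = (m+5)*(m+4)*(m+3)*(m+2)*(m+1)*m ! := by
  simp [Nat.factorial_succ]; ring

private lemma fact6 (m : ℕ) : (m+6)! = (m+6)*(m+5)*(m+4)*(m+3)*(m+2)*(m+1)*m ! := by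
  simp [Nat.factorial_succ]; ring

private lemma fact7 (m : ℕ) : (m+7)! = (m+7)*(m+6)*(m+5)*(m+4)*(m+3)*(m+2)*(m+1)*m ! := by
  simp [Nat.factorial_succ]; ring

private lemma fact8 (m : ℕ) :
    (m+8)! = (m+8)*(m+7)*(m+6)*(m+5)*(m+4)*(m+3)*(m+2)*(m+1)*m ! := by
  simp [Nat.factorial_succ]; ring

/-- case a = 3 -/
private lemma caseA3 (b : ℕ) (hb : 3 ≤ b) :
    Nat.choose (2*b+6) (b+3) ≠ 20 * Nat.choose (2*b) b := by
  intro hEq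
  have H1 := Nat.choose_mul_factorial_mul_factorial (show b+3 ≤ 2*b+6 by omega)
  rw [show 2*b+6 - (b+3) = b+3 by omega] at H1
  have H2 := Nat.choose_mul_factorial_mul_factorial (show b ≤ 2*b by omega)
  rw [show 2*b - b = b by omega] at H2
  have key : ((2*b+6)*(2*b+5)*(2*b+4)*(2*b+3)*(2*b+2)*(2*b+1)) * (2*b)!
      = (20*(((b+3)*(b+2)*(b+1))*((b+3)*(b+2)*(b+1)))) * (2*b)! := by
    calc ((2*b+6)*(2*b+5)*(2*b+4)*(2*b+3)*(2*b+2)*(2*b+1)) * (2*b)!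
        = (2*b+6)! := by rw [fact6 (2*b)]
      _ = Nat.choose (2*b+6) (b+3) * (b+3)! * (b+3)! := H1.symm
      _ = 20 * Nat.choose (2*b) b * ((b+3)!*(b+3)!) := by rw [hEq]; ring
      _ = (20*(((b+3)*(b+2)*(b+1))*((b+3)*(b+2)*(b+1))))
            * (Nat.choose (2*b) b * b ! * b !) := by rw [fact3 b]; ring
      _ = _ := by rw [H2]
  have hE := Nat.eq_of_mul_eq_mul_right (Nat.factorial_pos (2*b)) key
  have hE2 : (2*(2*b+1)*(2*b+3)*(2*b+5)) * (4*((b+1)*(b+2)*(b+3)))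
      = (5*((b+1)*(b+2)*(b+3))) * (4*((b+1)*(b+2)*(b+3))) := by
    calc (2*(2*b+1)*(2*b+3)*(2*b+5)) * (4*((b+1)*(b+2)*(b+3)))
        = (2*b+6)*(2*b+5)*(2*b+4)*(2*b+3)*(2*b+2)*(2*b+1) := by ring
      _ = 20*(((b+3)*(b+2)*(b+1))*((b+3)*(b+2)*(b+1))) := hE
      _ = _ := by ring
  have hE3 := Nat.eq_of_mul_eq_mul_right
    (show 0 < 4*((b+1)*(b+2)*(b+3)) by positivity) hE2
  nlinarith [hE3, hb, sq_nonneg b]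

/-- case a = 4 -/
private lemma caseA4 (b : ℕ) (hb : 4 ≤ b) :
    Nat.choose (2*b+8) (b+4) ≠ 70 * Nat.choose (2*b+1) b := by
  intro hEq
  have H1 := Nat.choose_mul_factorial_mul_factorial (show b+4 ≤ 2*b+8 by omega)
  rw [show 2*b+8 - (b+4) = b+4 by omega] at H1
  have H2 := Nat.choose_mul_factorial_mul_factorial (show b ≤ 2*b+1 by omega)
  rw [show 2*b+1 - b = b+1 by omega] at H2
  have e1 : (b+4)! = (b+4)*(b+3)*(b+2)*(b+1)*b ! := fact4 b
  have e2 : (b+4)! = (b+4)*(b+3)*(b+2)*(b+1)! := by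
    have := fact3 (b+1)
    rw [show b+1+3 = b+4 by ring, show b+1+2 = b+3 by ring, show b+1+1 = b+2 by ring] at this
    exact this
  have key : ((2*b+8)*(2*b+7)*(2*b+6)*(2*b+5)*(2*b+4)*(2*b+3)*(2*b+2)) * (2*b+1)!
      = (70*(((b+4)*(b+3)*(b+2)*(b+1))*((b+4)*(b+3)*(b+2)))) * (2*b+1)! := by
    calc ((2*b+8)*(2*b+7)*(2*b+6)*(2*b+5)*(2*b+4)*(2*b+3)*(2*b+2)) * (2*b+1)!
        = (2*b+8)! := by
          have := fact7 (2*b+1)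
          rw [show 2*b+1+7 = 2*b+8 by ring, show 2*b+1+6 = 2*b+7 by ring,
              show 2*b+1+5 = 2*b+6 by ring, show 2*b+1+4 = 2*b+5 by ring,
              show 2*b+1+3 = 2*b+4 by ring, show 2*b+1+2 = 2*b+3 by ring,
              show 2*b+1+1 = 2*b+2 by ring] at this
          rw [this]
      _ = Nat.choose (2*b+8) (b+4) * (b+4)! * (b+4)! := H1.symm
      _ = 70 * Nat.choose (2*b+1) b * ((b+4)!*(b+4)!) := by rw [hEq]; ring
      _ = (70*(((b+4)*(b+3)*(b+2)*(b+1))*((b+4)*(b+3)*(b+2))))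
            * (Nat.choose (2*b+1) b * b ! * (b+1)!) := by
          nth_rewrite 1 [e1]; nth_rewrite 1 [e2]; ring
      _ = _ := by rw [H2]
  have hE := Nat.eq_of_mul_eq_mul_right (Nat.factorial_pos (2*b+1)) key
  have hE2 : (8*(2*b+3)*(2*b+5)*(2*b+7)) * (2*((b+1)*(b+2)*(b+3)*(b+4)))
      = (35*((b+2)*(b+3)*(b+4))) * (2*((b+1)*(b+2)*(b+3)*(b+4))) := by
    calc (8*(2*b+3)*(2*b+5)*(2*b+7)) * (2*((b+1)*(b+2)*(b+3)*(b+4)))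
        = (2*b+8)*(2*b+7)*(2*b+6)*(2*b+5)*(2*b+4)*(2*b+3)*(2*b+2) := by ring
      _ = 70*(((b+4)*(b+3)*(b+2)*(b+1))*((b+4)*(b+3)*(b+2))) := hE
      _ = _ := by ring
  have hE3 := Nat.eq_of_mul_eq_mul_right
    (show 0 < 2*((b+1)*(b+2)*(b+3)*(b+4)) by positivity) hE2
  obtain ⟨c, rfl⟩ : ∃ c, b = c + 4 := ⟨b - 4, by omega⟩
  nlinarith [hE3, Nat.zero_le (c^3), Nat.zero_le (c^2), Nat.zero_le c]

/-- case a = 5 -/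
private lemma caseA5 (b : ℕ) (hb : 5 ≤ b) :
    Nat.choose (2*b+10) (b+5) ≠ 252 * Nat.choose (2*b+2) b := by
  intro hEq
  have H1 := Nat.choose_mul_factorial_mul_factorial (show b+5 ≤ 2*b+10 by omega)
  rw [show 2*b+10 - (b+5) = b+5 by omega] at H1
  have H2 := Nat.choose_mul_factorial_mul_factorial (show b ≤ 2*b+2 by omega)
  rw [show 2*b+2 - b = b+2 by omega] at H2
  have e1 : (b+5)! = (b+5)*(b+4)*(b+3)*(b+2)*(b+1)*b ! := fact5 b
  have e2 : (b+5)! = (b+5)*(b+4)*(b+3)*(b+2)! := by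
    have := fact3 (b+2)
    rw [show b+2+3 = b+5 by ring, show b+2+2 = b+4 by ring, show b+2+1 = b+3 by ring] at this
    exact this
  have key : ((2*b+10)*(2*b+9)*(2*b+8)*(2*b+7)*(2*b+6)*(2*b+5)*(2*b+4)*(2*b+3)) * (2*b+2)!
      = (252*(((b+5)*(b+4)*(b+3)*(b+2)*(b+1))*((b+5)*(b+4)*(b+3)))) * (2*b+2)! := by
    calc ((2*b+10)*(2*b+9)*(2*b+8)*(2*b+7)*(2*b+6)*(2*b+5)*(2*b+4)*(2*b+3)) * (2*b+2)!
        = (2*b+10)! := by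
          have := fact8 (2*b+2)
          rw [show 2*b+2+8 = 2*b+10 by ring, show 2*b+2+7 = 2*b+9 by ring,
              show 2*b+2+6 = 2*b+8 by ring, show 2*b+2+5 = 2*b+7 by ring,
              show 2*b+2+4 = 2*b+6 by ring, show 2*b+2+3 = 2*b+5 by ring,
              show 2*b+2+2 = 2*b+4 by ring, show 2*b+2+1 = 2*b+3 by ring] at this
          rw [this]
      _ = Nat.choose (2*b+10) (b+5) * (b+5)! * (b+5)! := H1.symm
      _ = 252 * Nat.choose (2*b+2) b * ((b+5)!*(b+5)!) := by rw [hEq]; ring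
      _ = (252*(((b+5)*(b+4)*(b+3)*(b+2)*(b+1))*((b+5)*(b+4)*(b+3))))
            * (Nat.choose (2*b+2) b * b ! * (b+2)!) := by
          nth_rewrite 1 [e1]; nth_rewrite 1 [e2]; ring
      _ = _ := by rw [H2]
  have hE := Nat.eq_of_mul_eq_mul_right (Nat.factorial_pos (2*b+2)) key
  have hE2 : (4*(2*b+3)*(2*b+5)*(2*b+7)*(2*b+9)) * (4*((b+2)*(b+3)*(b+4)*(b+5)))
      = (63*((b+1)*(b+3)*(b+4)*(b+5))) * (4*((b+2)*(b+3)*(b+4)*(b+5))) := by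
    calc (4*(2*b+3)*(2*b+5)*(2*b+7)*(2*b+9)) * (4*((b+2)*(b+3)*(b+4)*(b+5)))
        = (2*b+10)*(2*b+9)*(2*b+8)*(2*b+7)*(2*b+6)*(2*b+5)*(2*b+4)*(2*b+3) := by ring
      _ = 252*(((b+5)*(b+4)*(b+3)*(b+2)*(b+1))*((b+5)*(b+4)*(b+3))) := hE
      _ = _ := by ring
  have hE3 := Nat.eq_of_mul_eq_mul_right
    (show 0 < 4*((b+2)*(b+3)*(b+4)*(b+5)) by positivity) hE2
  rcases le_or_gt b 58 with hb' | hb'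
  · obtain ⟨d, hd⟩ : ∃ d, b + d = 58 := ⟨58 - b, by omega⟩
    nlinarith [hE3, hd, hb, Nat.zero_le (d*b*b), Nat.zero_le (d*b), Nat.zero_le (b*b*b),
      Nat.zero_le (b*b), Nat.zero_le (d*b*b*b)]
  · obtain ⟨e, rfl⟩ : ∃ e, b = e + 59 := ⟨b - 59, by omega⟩
    nlinarith [hE3, Nat.zero_le (e^4), Nat.zero_le (e^3), Nat.zero_le (e^2), Nat.zero_le e]

theorem stmt_6 (k a b : ℕ) (hk : 0 < k) (ha : 0 < a) (hb : 0 < b)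
    (hkab : k = a + b) (h1 : 4 < 2 * a) (h2 : 2 * a ≤ k) :
    Nat.choose (2 * k) k ≠ Nat.choose (2 * a) a * Nat.choose (a + 2 * b - 3) b := by
  subst hkab
  have hab : a ≤ b := by omega
  have ha3 : 3 ≤ a := by omega
  have hsplit : a = 3 ∨ a = 4 ∨ a = 5 ∨ 6 ≤ a := by omega
  rcases hsplit with rfl | rfl | rfl | h6
  · rw [show 2*(3+b) = 2*b+6 by ring, show 3+b = b+3 by ring,
        show 3+2*b-3 = 2*b by omega, show Nat.choose (2*3) 3 = 20 by decide]
    exact caseA3 b hab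
  · rw [show 2*(4+b) = 2*b+8 by ring, show 4+b = b+4 by ring,
        show 4+2*b-3 = 2*b+1 by omega, show Nat.choose (2*4) 4 = 70 by decide]
    exact caseA4 b hab
  · rw [show 2*(5+b) = 2*b+10 by ring, show 5+b = b+5 by ring,
        show 5+2*b-3 = 2*b+2 by omega, show Nat.choose (2*5) 5 = 252 by decide]
    exact caseA5 b hab
  · obtain ⟨t, rfl⟩ : ∃ t, a = t + 3 := ⟨a - 3, by omega⟩
    have ht : 3 ≤ t := by omega
    rw [show 2*(t+3+b) = 2*t+2*b+6 by ring, show t+3+b = t+b+3 by ring,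
        show 2*(t+3) = 2*t+6 by ring, show t+3+2*b-3 = t+2*b by omega]
    exact Nat.ne_of_lt (bigcase t ht b (by omega))
end

section
/- For all integers k ≥ 8, C(2k, k) ≠ C(8, 4) * C(2k - 5, k - 4). -/
theorem stmt_7 (k : ℕ) (hk : 8 ≤ k) :
    Nat.choose (2 * k) k ≠ Nat.choose 8 4 * Nat.choose (2 * k - 5) (k - 4) := by
  obtain ⟨m, rfl⟩ := Nat.exists_eq_add_of_le hk
  intro h
  rw [show 2 * (8 + m) - 5 = 2 * m + 11 from by omega,
      show (8 + m) - 4 = m + 4 from by omega,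
      show 2 * (8 + m) = 2 * m + 16 from by omega,
      show 8 + m = m + 8 from by omega,
      show Nat.choose 8 4 = 70 from by decide] at h
  have f1 : (2*m+16).choose (m+8) * (m+8).factorial * (m+8).factorial
      = (2*m+16).factorial := by
    have := Nat.choose_mul_factorial_mul_factorial (show m+8 ≤ 2*m+16 by omega)
    rwa [show 2*m+16 - (m+8) = m+8 from by omega] at this
  have f2 : (2*m+11).choose (m+4) * (m+4).factorial * (m+7).factorial
      = (2*m+11).factorial := by
    have := Nat.choose_mul_factorial_mul_factorial (show m+4 ≤ 2*m+11 by omega)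
    rwa [show 2*m+11 - (m+4) = m+7 from by omega] at this
  have e5 : ∀ n : ℕ, (n+5).factorial = (n+5)*(n+4)*(n+3)*(n+2)*(n+1)*n.factorial := by
    intro n
    simp [Nat.factorial_succ]; ring
  have e4 : ∀ n : ℕ, (n+4).factorial = (n+4)*(n+3)*(n+2)*(n+1)*n.factorial := by
    intro n
    simp [Nat.factorial_succ]; ring
  have big : (2*m+16).factorial
      = (2*m+16)*(2*m+15)*(2*m+14)*(2*m+13)*(2*m+12)*(2*m+11).factorial := by
    have := e5 (2*m+11)
    rwa [show 2*m+11+5 = 2*m+16 from by omega, show 2*m+11+4 = 2*m+15 from by omega,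
      show 2*m+11+3 = 2*m+14 from by omega, show 2*m+11+2 = 2*m+13 from by omega,
      show 2*m+11+1 = 2*m+12 from by omega] at this
  have small : (m+8).factorial = (m+8)*(m+7)*(m+6)*(m+5)*(m+4).factorial := by
    have := e4 (m+4)
    rwa [show m+4+4 = m+8 from by omega, show m+4+3 = m+7 from by omega,
      show m+4+2 = m+6 from by omega, show m+4+1 = m+5 from by omega] at this
  have small2 : (m+8).factorial = (m+8)*(m+7).factorial := by
    have := Nat.factorial_succ (m+7)
    rwa [show m+7+1 = m+8 from by omega] at this
  set C := (2*m+11).choose (m+4) with hC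
  have hCpos : 0 < C := Nat.choose_pos (by omega)
  -- key equation
  have key : 70 * C * ((m+8)*(m+7)*(m+6)*(m+5)*(m+4).factorial) * ((m+8)*(m+7).factorial)
      = (2*m+16)*(2*m+15)*(2*m+14)*(2*m+13)*(2*m+12)*(C * (m+4).factorial * (m+7).factorial) := by
    calc 70 * C * ((m+8)*(m+7)*(m+6)*(m+5)*(m+4).factorial) * ((m+8)*(m+7).factorial)
        = (2*m+16).choose (m+8) * (m+8).factorial * (m+8).factorial := by
          rw [h, ← small, ← small2]
      _ = (2*m+16).factorial := f1
      _ = (2*m+16)*(2*m+15)*(2*m+14)*(2*m+13)*(2*m+12)*(2*m+11).factorial := big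
      _ = _ := by rw [← f2]
  have key2 : (70*(m+8)*(m+7)*(m+6)*(m+5)*(m+8)) * (C * (m+4).factorial * (m+7).factorial)
      = ((2*m+16)*(2*m+15)*(2*m+14)*(2*m+13)*(2*m+12)) * (C * (m+4).factorial * (m+7).factorial) := by
    rw [← key]; ring
  have hX : 0 < C * (m+4).factorial * (m+7).factorial :=
    Nat.mul_pos (Nat.mul_pos hCpos (Nat.factorial_pos _)) (Nat.factorial_pos _)
  have := Nat.eq_of_mul_eq_mul_right hX key2
  have diff : 70*(m+8)*(m+7)*(m+6)*(m+5)*(m+8)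
      = (2*m+16)*(2*m+15)*(2*m+14)*(2*m+13)*(2*m+12)
        + (m+8)*(m+7)*(m+6)*(38*m^2+462*m+1240) := by ring
  have hD : 0 < (m+8)*(m+7)*(m+6)*(38*m^2+462*m+1240) :=
    Nat.mul_pos (Nat.mul_pos (Nat.mul_pos (by omega) (by omega)) (by omega))
      (Nat.lt_of_lt_of_le (by norm_num) (Nat.le_add_left 1240 _))
  linarith [this, diff, hD]
end

section
/- For all integers k ≥ 6, C(2k, k) ≠ C(6, 3) * C(2k - 4, k - 3). -/
set_option maxHeartbeats 1000000 in
theorem stmt_8 (k : ℕ) (hk : 6 ≤ k) :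
    Nat.choose (2 * k) k ≠ Nat.choose 6 3 * Nat.choose (2 * k - 4) (k - 3) := by
  obtain ⟨m, rfl⟩ : ∃ m, k = m + 6 := ⟨k - 6, by omega⟩
  intro h
  have e1 : 2 * (m + 6) = 2 * m + 12 := by ring
  have e2 : 2 * m + 12 - 4 = 2 * m + 8 := by omega
  have e3 : m + 6 - 3 = m + 3 := by omega
  rw [e1, e2, e3] at h
  have h1 := Nat.choose_mul_factorial_mul_factorial (show m + 6 ≤ 2 * m + 12 by omega)
  have h2 := Nat.choose_mul_factorial_mul_factorial (show m + 3 ≤ 2 * m + 8 by omega)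
  have e4 : 2 * m + 12 - (m + 6) = m + 6 := by omega
  have e5 : 2 * m + 8 - (m + 3) = m + 5 := by omega
  rw [e4] at h1
  rw [e5] at h2
  have f12 : Nat.factorial (2 * m + 12) =
      (2 * m + 12) * (2 * m + 11) * (2 * m + 10) * (2 * m + 9) * Nat.factorial (2 * m + 8) := by
    show Nat.factorial (2 * m + 8 + 4) = _
    simp [Nat.factorial_succ]
    ring
  have f6 : Nat.factorial (m + 6) = (m + 6) * (m + 5) * (m + 4) * Nat.factorial (m + 3) := by
    show Nat.factorial (m + 3 + 3) = _
    simp [Nat.factorial_succ]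
    ring
  have f6' : Nat.factorial (m + 6) = (m + 6) * Nat.factorial (m + 5) := by
    show Nat.factorial (m + 5 + 1) = _
    simp [Nat.factorial_succ]
  have hB : 0 < (2 * m + 8).choose (m + 3) := Nat.choose_pos (by omega)
  have hF3 : 0 < Nat.factorial (m + 3) := Nat.factorial_pos _
  have hF5 : 0 < Nat.factorial (m + 5) := Nat.factorial_pos _
  set B := (2 * m + 8).choose (m + 3) with hBdef
  set F3 := Nat.factorial (m + 3)
  set F5 := Nat.factorial (m + 5)
  -- substitute into h1
  have key : 20 * B * ((m + 6) * (m + 5) * (m + 4) * F3) * ((m + 6) * F5)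
      = (2 * m + 12) * (2 * m + 11) * (2 * m + 10) * (2 * m + 9) * (B * F3 * F5) := by
    have h6 : Nat.choose 6 3 = 20 := by decide
    calc 20 * B * ((m + 6) * (m + 5) * (m + 4) * F3) * ((m + 6) * F5)
        = (20 * B) * Nat.factorial (m + 6) * Nat.factorial (m + 6) := by
          nth_rewrite 1 [f6]; rw [f6']
      _ = (2 * m + 12).choose (m + 6) * Nat.factorial (m + 6) * Nat.factorial (m + 6) := by
          rw [h, h6]
      _ = Nat.factorial (2 * m + 12) := h1
      _ = (2 * m + 12) * (2 * m + 11) * (2 * m + 10) * (2 * m + 9) * Nat.factorial (2 * m + 8) := f12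
      _ = (2 * m + 12) * (2 * m + 11) * (2 * m + 10) * (2 * m + 9) * (B * F3 * F5) := by rw [← h2]
  have key2 : 20 * ((m + 6) * (m + 5) * (m + 4)) * (m + 6)
      = (2 * m + 12) * (2 * m + 11) * (2 * m + 10) * (2 * m + 9) := by
    have hpos : 0 < B * F3 * F5 := by positivity
    apply Nat.eq_of_mul_eq_mul_right hpos
    calc 20 * ((m + 6) * (m + 5) * (m + 4)) * (m + 6) * (B * F3 * F5)
        = 20 * B * ((m + 6) * (m + 5) * (m + 4) * F3) * ((m + 6) * F5) := by ring
      _ = _ := key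
  have key3 : (4:ℤ) * (m + 6) * (m + 5) * (m * m + 10 * m + 21) = 0 := by
    have key2' : (20:ℤ) * ((m + 6) * (m + 5) * (m + 4)) * (m + 6)
        = (2 * m + 12) * (2 * m + 11) * (2 * m + 10) * (2 * m + 9) := by exact_mod_cast key2
    linear_combination key2'
  have hpos : (0:ℤ) < 4 * ((m:ℤ) + 6) * (m + 5) * (m * m + 10 * m + 21) := by positivity
  linarith [key3, hpos]
end

section
/- Let k, a, b be positive integers with k = a + b. Then C(2k, k) = C(2a, a) * C(1 + 2b, b) if and only if a = 1. -/
open Nat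

lemma cb_succ (b : ℕ) : centralBinom (b + 1) = 2 * choose (2 * b + 1) b := by
  have h : centralBinom (b + 1) = choose (2 * b + 1 + 1) (b + 1) := by
    unfold centralBinom; ring_nf
  rw [h, choose_succ_succ, choose_symm_half]; omega

lemma key (a b : ℕ) (hb : 0 < b) (ha : 2 ≤ a) :
    centralBinom a * choose (2 * b + 1) b < centralBinom (a + b) := by
  induction a with
  | zero => omega
  | succ n ih =>
    rcases Nat.lt_or_ge n 2 with h2 | h2
    · -- base case n+1 = 2, so n = 1
      interval_cases n
      · omega
      · -- a = 2 : need cb 2 * C(2b+1,b) < cb (2+b)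
        have hC : 0 < choose (2 * b + 1) b := choose_pos (by omega)
        -- (b+2) * cb (b+2) = 2*(2*(b+1)+1) * cb (b+1) = (8b+12)*C
        have h1 := succ_mul_centralBinom_succ (b + 1)
        rw [cb_succ b] at h1
        have hcb2 : centralBinom 2 = 6 := by decide
        have : (b + 2) * (centralBinom 2 * choose (2 * b + 1) b)
             < (b + 2) * centralBinom (2 + b) := by
          have h2b : (2 : ℕ) + b = b + 1 + 1 := by ring
          rw [h2b, hcb2]
          calc (b + 2) * (6 * choose (2 * b + 1) b)
              = (6 * b + 12) * choose (2 * b + 1) b := by ring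
            _ < (2 * (2 * (b + 1) + 1) * 2) * choose (2 * b + 1) b := by
                have : 6 * b + 12 < 2 * (2 * (b + 1) + 1) * 2 := by omega
                exact Nat.mul_lt_mul_of_lt_of_le this (le_refl _) hC
            _ = (b + 1 + 1) * centralBinom (b + 1 + 1) := by
                rw [h1]; ring
        exact Nat.lt_of_mul_lt_mul_left this
    · -- inductive step, n ≥ 2
      have ih' := ih h2
      set K := n + b with hK
      have h1 := succ_mul_centralBinom_succ n
      have h2' := succ_mul_centralBinom_succ K
      have hfac : (K + 1) * (2 * n + 1) ≤ (n + 1) * (2 * K + 1) := by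
        simp only [hK]; nlinarith
      have main : ((n + 1) * (K + 1)) * (centralBinom (n + 1) * choose (2 * b + 1) b)
          < ((n + 1) * (K + 1)) * centralBinom (K + 1) := by
        calc ((n + 1) * (K + 1)) * (centralBinom (n + 1) * choose (2 * b + 1) b)
            = (K + 1) * (((n+1) * centralBinom (n+1)) * choose (2 * b + 1) b) := by ring
          _ = 2 * ((K + 1) * (2 * n + 1)) * (centralBinom n * choose (2 * b + 1) b) := by
              rw [h1]; ring
          _ < 2 * ((K + 1) * (2 * n + 1)) * centralBinom K := by
              apply Nat.mul_lt_mul_of_le_of_lt (le_refl _) ih'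
              positivity
          _ ≤ 2 * ((n + 1) * (2 * K + 1)) * centralBinom K := by
              apply Nat.mul_le_mul_right
              exact Nat.mul_le_mul_left 2 hfac
          _ = (n + 1) * ((K + 1) * centralBinom (K + 1)) := by rw [h2']; ring
          _ = ((n + 1) * (K + 1)) * centralBinom (K + 1) := by ring
      have : n + 1 + b = K + 1 := by omega
      rw [this]
      exact Nat.lt_of_mul_lt_mul_left main

theorem stmt_11 (k a b : ℕ) (hk : 0 < k) (ha : 0 < a) (hb : 0 < b)
    (hkab : k = a + b) :
    Nat.choose (2 * k) k = Nat.choose (2 * a) a * Nat.choose (1 + 2 * b) b ↔ a = 1 := by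
  subst hkab
  have hswap : 1 + 2 * b = 2 * b + 1 := by ring
  rw [hswap]
  constructor
  · intro h
    by_contra hne
    have h2 : 2 ≤ a := by omega
    have := key a b hb h2
    rw [centralBinom_eq_two_mul_choose, centralBinom_eq_two_mul_choose] at this
    omega
  · intro h
    subst h
    have := cb_succ b
    rw [centralBinom_eq_two_mul_choose] at this
    have h2 : 1 + b = b + 1 := by ring
    rw [h2]
    norm_num
    exact this
end

section
/- Let a and k be positive integers with k > a. Suppose C(2a, a) divides C(2k, k) (i.e. their quotient is an integer) and p is a prime with p > 3(k - a) such that p divides the product (2a+1)(2a+2)⋯(2k). Then p does not divide the product (a+1)(a+2)⋯k, and p divides C(2k, k) / C(2a, a). -/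
/-!
Write `D = (a+1)⋯k` and `N = (2a+1)⋯(2k)`. Then `C(2k,k) · D² = C(2a,a) · N`, so the quotient
`q = C(2k,k) / C(2a,a)` satisfies `q · D² = N`. If `p ∣ j` for some `a < j ≤ k`, then `2j` is the only
multiple of `p` in `[2a+1, 2k]`, an interval shorter than `p`; as `p` is odd,
`v_p(N) = v_p(j) ≤ v_p(D) < 2 v_p(D) ≤ v_p(N)`. Hence `p ∤ D`, and `p ∣ N = q · D²` forces `p ∣ q`.
-/

open Finset Nat

theorem Nat.factorial_mul_prod_Icc {a k : ℕ} (h : a ≤ k) :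
    a ! * ∏ i ∈ Icc (a + 1) k, i = k ! := by
  rw [← Finset.Ico_add_one_right_eq_Icc, ← prod_Ico_id_eq_factorial, ← prod_Ico_id_eq_factorial,
    prod_Ico_consecutive _ (by omega) (by omega)]

theorem Nat.eq_of_dvd_of_mem_Icc {p m n i j : ℕ} (hmn : n - m < p)
    (hi : i ∈ Icc m n) (hj : j ∈ Icc m n) (hpi : p ∣ i) (hpj : p ∣ j) : i = j := by
  rw [mem_Icc] at hi hj
  refine ((Nat.modEq_zero_iff_dvd.mpr hpi).trans
    (Nat.modEq_zero_iff_dvd.mpr hpj).symm).eq_of_abs_lt ?_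
  rw [abs_sub_lt_iff]
  omega

theorem Nat.factorization_prod_id_eq_of_unique_dvd {s : Finset ℕ} {p j : ℕ} (hs : 0 ∉ s)
    (hj : j ∈ s) (huniq : ∀ i ∈ s, p ∣ i → i = j) :
    (∏ i ∈ s, i).factorization p = j.factorization p := by
  rw [Nat.factorization_prod fun i hi h => hs (h ▸ hi), Finsupp.finsetSum_apply,
    sum_eq_single_of_mem j hj]
  intro i hi hij
  exact Nat.factorization_eq_zero_of_not_dvd fun hpi => hij (huniq i hi hpi)

theorem Nat.choose_two_mul_mul_prod_Icc_sq {a k : ℕ} (h : a ≤ k) :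
    (2 * k).choose k * (∏ i ∈ Icc (a + 1) k, i) ^ 2 =
      (2 * a).choose a * ∏ i ∈ Icc (2 * a + 1) (2 * k), i := by
  have hk := Nat.choose_mul_factorial_mul_factorial (show k ≤ 2 * k by omega)
  have ha := Nat.choose_mul_factorial_mul_factorial (show a ≤ 2 * a by omega)
  rw [show 2 * k - k = k by omega] at hk
  rw [show 2 * a - a = a by omega] at ha
  apply Nat.eq_of_mul_eq_mul_left (by positivity : 0 < a ! * a ! * (2 * a)!)
  calc a ! * a ! * (2 * a)! * ((2 * k).choose k * (∏ i ∈ Icc (a + 1) k, i) ^ 2)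
      = (2 * k).choose k * (a ! * ∏ i ∈ Icc (a + 1) k, i) * (a ! * ∏ i ∈ Icc (a + 1) k, i)
          * (2 * a)! := by ring
    _ = (2 * a)! * ((2 * a)! * ∏ i ∈ Icc (2 * a + 1) (2 * k), i) := by
      rw [Nat.factorial_mul_prod_Icc h, hk, Nat.factorial_mul_prod_Icc (by omega), mul_comm]
    _ = _ := by rw [← ha]; ring

theorem Nat.not_dvd_prod_Icc_of_sq_dvd {a k p : ℕ} (hp : p.Prime) (hp2 : p ≠ 2)
    (hpk : 2 * (k - a) < p)
    (hsq : (∏ i ∈ Icc (a + 1) k, i) ^ 2 ∣ ∏ i ∈ Icc (2 * a + 1) (2 * k), i) :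
    ¬ p ∣ ∏ i ∈ Icc (a + 1) k, i := by
  intro hpD
  obtain ⟨j, hj, hpj⟩ := hp.prime.exists_mem_finset_dvd hpD
  have hj' := mem_Icc.mp hj
  have hD0 : ∏ i ∈ Icc (a + 1) k, i ≠ 0 := prod_ne_zero_iff.mpr fun i hi => by
    simp only [mem_Icc] at hi; omega
  have hN0 : ∏ i ∈ Icc (2 * a + 1) (2 * k), i ≠ 0 := prod_ne_zero_iff.mpr fun i hi => by
    simp only [mem_Icc] at hi; omega
  have hvN : (∏ i ∈ Icc (2 * a + 1) (2 * k), i).factorization p = j.factorization p := by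
    have h2j : 2 * j ∈ Icc (2 * a + 1) (2 * k) := mem_Icc.mpr (by omega)
    rw [Nat.factorization_prod_id_eq_of_unique_dvd (by simp) h2j
      fun i hi hpi => Nat.eq_of_dvd_of_mem_Icc (by omega) hi h2j hpi (dvd_mul_of_dvd_right hpj 2),
      Nat.factorization_mul two_ne_zero (by omega), Finsupp.add_apply,
      Nat.factorization_eq_zero_of_not_dvd fun h => hp2 ((Nat.prime_dvd_prime_iff_eq hp
        Nat.prime_two).mp h), zero_add]
  have hvD : j.factorization p ≤ (∏ i ∈ Icc (a + 1) k, i).factorization p :=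
    (Nat.factorization_le_iff_dvd (by omega) hD0).mpr (dvd_prod_of_mem _ hj) p
  have hvsq : 2 * (∏ i ∈ Icc (a + 1) k, i).factorization p ≤
      (∏ i ∈ Icc (2 * a + 1) (2 * k), i).factorization p := by
    simpa using (Nat.factorization_le_iff_dvd (pow_ne_zero 2 hD0) hN0).mpr hsq p
  have hvj : 0 < j.factorization p := hp.factorization_pos_of_dvd (by omega) hpj
  omega

theorem stmt_12_general (a k : ℕ) (hak : a < k)
    (hdvd : Nat.choose (2 * a) a ∣ Nat.choose (2 * k) k)
    (p : ℕ) (hp : p.Prime) (hp3 : p > 3 * (k - a))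
    (hpdvd : p ∣ ∏ i ∈ Finset.Icc (2 * a + 1) (2 * k), i) :
    ¬ p ∣ (∏ i ∈ Finset.Icc (a + 1) k, i) ∧
      p ∣ Nat.choose (2 * k) k / Nat.choose (2 * a) a := by
  obtain ⟨q, hq⟩ := hdvd
  have hcancel : q * (∏ i ∈ Icc (a + 1) k, i) ^ 2 = ∏ i ∈ Icc (2 * a + 1) (2 * k), i := by
    apply Nat.eq_of_mul_eq_mul_left (Nat.choose_pos (by omega : a ≤ 2 * a))
    rw [← Nat.choose_two_mul_mul_prod_Icc_sq hak.le, hq, mul_assoc]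
  have hnd := Nat.not_dvd_prod_Icc_of_sq_dvd hp (by omega) (by omega) (Dvd.intro_left q hcancel)
  refine ⟨hnd, ?_⟩
  rw [hq, Nat.mul_div_cancel_left _ (Nat.choose_pos (by omega))]
  rw [← hcancel] at hpdvd
  exact (hp.dvd_mul.mp hpdvd).resolve_right fun h => hnd (hp.dvd_of_dvd_pow h)

theorem stmt_12 (a k : ℕ) (ha : 0 < a) (hak : a < k)
    (hdvd : Nat.choose (2 * a) a ∣ Nat.choose (2 * k) k)
    (p : ℕ) (hp : p.Prime) (hp3 : p > 3 * (k - a))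
    (hpdvd : p ∣ ∏ i ∈ Finset.Icc (2 * a + 1) (2 * k), i) :
    ¬ p ∣ (∏ i ∈ Finset.Icc (a + 1) k, i) ∧
      p ∣ Nat.choose (2 * k) k / Nat.choose (2 * a) a :=
  stmt_12_general a k hak hdvd p hp hp3 hpdvd
end

section
/- Let m, n, r be positive integers with m > r ≥ 1. Then C(mn, rn) < (1/√(2π)) * n^(-1/2) * m^(mn + 1/2) / ((m - r)^((m-r)n + 1/2) * r^(rn + 1/2)). -/
open Real Stirling

lemma strict_anti_stirling (j : ℕ) : stirlingSeq (j + 2) < stirlingSeq (j + 1) := by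
  have h := log_stirlingSeq_diff_hasSum j
  have hpos : 0 < Real.log (stirlingSeq (j + 1)) - Real.log (stirlingSeq (j + 2)) := by
    rw [← h.tsum_eq]
    refine Summable.tsum_pos h.summable (fun i => by positivity) 0 (by positivity)
  have h1 := stirlingSeq'_pos j
  have h2 := stirlingSeq'_pos (j + 1)
  have := Real.log_lt_log_iff h2 h1
  rw [show j + 1 + 1 = j + 2 from rfl] at h2 this
  exact this.mp (by linarith)

lemma sqrt_pi_lt_stirlingSeq (j : ℕ) (hj : 0 < j) : Real.sqrt π < stirlingSeq j := by
  obtain ⟨k, rfl⟩ := Nat.exists_eq_add_of_lt hj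
  rw [zero_add]
  have hle : Real.sqrt π ≤ stirlingSeq (k + 2) := by
    refine le_of_tendsto tendsto_stirlingSeq_sqrt_pi ?_
    filter_upwards [Filter.eventually_ge_atTop (k + 2)] with N hN
    obtain ⟨l, rfl⟩ := Nat.exists_eq_add_of_le hN
    have := stirlingSeq'_antitone (Nat.le_add_right (k + 1) l)
    simpa [Function.comp, Nat.succ_eq_add_one, show k + 1 + l + 1 = k + 2 + l by omega] using this
  exact hle.trans_lt (strict_anti_stirling k)


noncomputable def Aterm (j : ℕ) : ℝ := Real.sqrt (2 * j) * ((j : ℝ) / Real.exp 1) ^ j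

lemma Aterm_pos (j : ℕ) (hj : 0 < j) : 0 < Aterm j := by
  have : (0:ℝ) < j := by exact_mod_cast hj
  unfold Aterm; positivity

lemma factorial_eq_stirling (j : ℕ) (hj : 0 < j) :
    (j.factorial : ℝ) = stirlingSeq j * Aterm j := by
  have h : 0 < Aterm j := Aterm_pos j hj
  rw [stirlingSeq, Aterm]
  rw [Aterm] at h
  field_simp

lemma log_Aterm (j : ℕ) (hj : 0 < j) :
    Real.log (Aterm j) = 1 / 2 * (Real.log 2 + Real.log j) + j * (Real.log j - 1) := by
  have h0 : (0:ℝ) < j := by exact_mod_cast hj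
  rw [Aterm, Real.log_mul (by positivity) (by positivity), Real.log_pow,
    Real.log_div (by positivity) (Real.exp_ne_zero 1), Real.log_exp,
    Real.log_sqrt (by positivity), Real.log_mul (by norm_num) (by positivity)]
  ring

open Real in
theorem stmt_17 (m n r : ℕ) (hn : 0 < n) (hr : 1 ≤ r) (hmr : m > r) :
    (Nat.choose (m * n) (r * n) : ℝ) <
      (1 / Real.sqrt (2 * Real.pi)) * (n : ℝ) ^ (-(1 : ℝ) / 2) *
        (m : ℝ) ^ ((m * n : ℝ) + 1 / 2) /
        (((m : ℝ) - r) ^ (((m : ℝ) - r) * n + 1 / 2) * (r : ℝ) ^ ((r * n : ℝ) + 1 / 2)) := by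
  set N := m * n with hN
  set K := r * n with hK
  set L := (m - r) * n with hL
  have hKL : K + L = N := by
    rw [hK, hL, hN, ← add_mul, Nat.add_sub_cancel' hmr.le]
  have hKpos : 0 < K := Nat.mul_pos (by omega) hn
  have hLpos : 0 < L := Nat.mul_pos (by omega) hn
  have hNpos : 0 < N := by omega
  have hKN : K ≤ N := by omega
  have hm0 : (0:ℝ) < m := by exact_mod_cast (by omega : 0 < m)
  have hr0 : (0:ℝ) < r := by exact_mod_cast hr
  have hn0 : (0:ℝ) < n := by exact_mod_cast hn
  have hq0 : (0:ℝ) < (m:ℝ) - r := by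
    have : (r:ℝ) < m := by exact_mod_cast hmr
    linarith
  have hcastN : (N:ℝ) = (m:ℝ) * n := by rw [hN]; push_cast; ring
  have hcastK : (K:ℝ) = (r:ℝ) * n := by rw [hK]; push_cast; ring
  have hcastL : (L:ℝ) = ((m:ℝ) - r) * n := by
    rw [hL]; push_cast [Nat.cast_sub hmr.le]; ring
  have hAN := Aterm_pos N hNpos
  have hAK := Aterm_pos K hKpos
  have hAL := Aterm_pos L hLpos
  have hsqpi : (0:ℝ) < Real.sqrt π := Real.sqrt_pos.mpr Real.pi_pos
  have hsN : Real.sqrt π < stirlingSeq N := sqrt_pi_lt_stirlingSeq N hNpos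
  have hsK : Real.sqrt π < stirlingSeq K := sqrt_pi_lt_stirlingSeq K hKpos
  have hsL : Real.sqrt π < stirlingSeq L := sqrt_pi_lt_stirlingSeq L hLpos
  have hsKN : stirlingSeq N ≤ stirlingSeq K := by
    have h := stirlingSeq'_antitone (show K - 1 ≤ N - 1 by omega)
    simpa [Function.comp, Nat.succ_eq_add_one, Nat.sub_add_cancel hKpos,
      Nat.sub_add_cancel hNpos] using h
  have hkey : Real.sqrt π * stirlingSeq N < stirlingSeq K * stirlingSeq L := by
    nlinarith [hsqpi, hsN, hsK, hsL, hsKN]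
  have hchoose : (Nat.choose N K : ℝ) =
      (stirlingSeq N * Aterm N) /
        ((stirlingSeq K * Aterm K) * (stirlingSeq L * Aterm L)) := by
    rw [Nat.cast_choose ℝ hKN, show N - K = L by omega,
      factorial_eq_stirling N hNpos, factorial_eq_stirling K hKpos,
      factorial_eq_stirling L hLpos]
  have hstep : (Nat.choose N K : ℝ) < Aterm N / (Real.sqrt π * Aterm K * Aterm L) := by
    rw [hchoose, div_lt_div_iff₀
      (mul_pos (mul_pos (hsqpi.trans hsK) hAK) (mul_pos (hsqpi.trans hsL) hAL))
      (mul_pos (mul_pos hsqpi hAK) hAL)]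
    nlinarith [mul_lt_mul_of_pos_right hkey (mul_pos (mul_pos hAN hAK) hAL)]
  calc (Nat.choose N K : ℝ) < Aterm N / (Real.sqrt π * Aterm K * Aterm L) := hstep
    _ = _ := by
      have hpos1 : (0:ℝ) < Aterm N / (Real.sqrt π * Aterm K * Aterm L) := by
        exact div_pos hAN (mul_pos (mul_pos hsqpi hAK) hAL)
      have hpos2 : (0:ℝ) <
          (1 / Real.sqrt (2 * π)) * (n : ℝ) ^ (-(1 : ℝ) / 2) *
            (m : ℝ) ^ ((m : ℝ) * n + 1 / 2) /
            (((m : ℝ) - r) ^ (((m : ℝ) - r) * n + 1 / 2) * (r : ℝ) ^ ((r : ℝ) * n + 1 / 2)) := by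
        have h2pi : (0:ℝ) < Real.sqrt (2 * π) := Real.sqrt_pos.mpr (by positivity)
        positivity
      apply Real.log_injOn_pos (Set.mem_Ioi.mpr hpos1) (Set.mem_Ioi.mpr hpos2)
      rw [Real.log_div hAN.ne' (mul_pos (mul_pos hsqpi hAK) hAL).ne',
        Real.log_mul (mul_pos hsqpi hAK).ne' hAL.ne',
        Real.log_mul hsqpi.ne' hAK.ne',
        Real.log_sqrt Real.pi_pos.le,
        log_Aterm N hNpos, log_Aterm K hKpos, log_Aterm L hLpos,
        hcastN, hcastK, hcastL,
        Real.log_mul hm0.ne' hn0.ne', Real.log_mul hr0.ne' hn0.ne',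
        Real.log_mul hq0.ne' hn0.ne']
      have hnum : ((1:ℝ) / Real.sqrt (2 * π)) * (n : ℝ) ^ (-(1 : ℝ) / 2) *
          (m : ℝ) ^ ((m : ℝ) * n + 1 / 2) ≠ 0 := by
        have h2pi : (0:ℝ) < Real.sqrt (2 * π) := Real.sqrt_pos.mpr (by positivity)
        positivity
      rw [Real.log_div hnum
          (mul_pos (Real.rpow_pos_of_pos hq0 _) (Real.rpow_pos_of_pos hr0 _)).ne',
        Real.log_mul (Real.rpow_pos_of_pos hq0 _).ne' (Real.rpow_pos_of_pos hr0 _).ne',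
        Real.log_mul (by
          have h2pi : (0:ℝ) < Real.sqrt (2 * π) := Real.sqrt_pos.mpr (by positivity)
          positivity) (Real.rpow_pos_of_pos hm0 _).ne',
        Real.log_mul (by
          have h2pi : (0:ℝ) < Real.sqrt (2 * π) := Real.sqrt_pos.mpr (by positivity)
          positivity) (Real.rpow_pos_of_pos hn0 _).ne',
        Real.log_rpow hm0, Real.log_rpow hn0, Real.log_rpow hq0, Real.log_rpow hr0,
        Real.log_div one_ne_zero (by positivity), Real.log_one,
        Real.log_sqrt (by positivity),
        Real.log_mul (by norm_num : (2:ℝ) ≠ 0) Real.pi_pos.ne']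
      ring
end

section
/- Let m, n, r be positive integers with m > r ≥ 1. Then C(mn, rn) > (1/√(2π)) * e^(-1/(8n)) * n^(-1/2) * m^(mn + 1/2) / ((m - r)^((m-r)n + 1/2) * r^(rn + 1/2)). -/
open Filter Finset Stirling Topology Nat Real


lemma polyL (y : ℝ) (hy : 1 ≤ y) :
    (1/(12*y) - 1/(360*y^3)) - (1/(12*(y+1)) - 1/(360*(y+1)^3))
      ≤ (1/(2*y+1))^2/3 + ((1/(2*y+1))^2)^2/5 := by
  have hy0 : 0 < y := by linarith
  have h1 : 0 < y + 1 := by linarith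
  have h2 : 0 < 2*y+1 := by linarith
  have key : ((1/(2*y+1))^2/3 + ((1/(2*y+1))^2)^2/5) -
      ((1/(12*y) - 1/(360*y^3)) - (1/(12*(y+1)) - 1/(360*(y+1)^3)))
      = (1 + 11*y + 21*y^2 + 20*y^3 + 10*y^4)/(360*y^3*(y+1)^3*(2*y+1)^4) := by
    field_simp
    ring
  nlinarith [div_nonneg (by positivity : (0:ℝ) ≤ 1 + 11*y + 21*y^2 + 20*y^3 + 10*y^4)
    (by positivity : (0:ℝ) ≤ 360*y^3*(y+1)^3*(2*y+1)^4), key]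

lemma polyU (y : ℝ) (hy : 1 ≤ y) :
    (1/(2*y+1))^2/3 + ((1/(2*y+1))^2)^2/5 + ((1/(2*y+1))^2)^3/(7*(1-(1/(2*y+1))^2))
      ≤ (1/(12*y) - 1/(360*y^3) + 1/(400*y^5))
        - (1/(12*(y+1)) - 1/(360*(y+1)^3) + 1/(400*(y+1)^5)) := by
  have hy0 : 0 < y := by linarith
  have h1 : 0 < y + 1 := by linarith
  have h2 : 0 < 2*y+1 := by linarith
  have hx : (1:ℝ) - (1/(2*y+1))^2 = 4*y*(y+1)/(2*y+1)^2 := by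
    field_simp; ring
  rw [hx]
  have key : ((1/(12*y) - 1/(360*y^3) + 1/(400*y^5))
        - (1/(12*(y+1)) - 1/(360*(y+1)^3) + 1/(400*(y+1)^5)))
      - ((1/(2*y+1))^2/3 + ((1/(2*y+1))^2)^2/5 + ((1/(2*y+1))^2)^3/(7*(4*y*(y+1)/(2*y+1)^2)))
      = (63 + 819*y + 4592*y^2 + 14336*y^3 + 27583*y^4 + 34130*y^5 + 27430*y^6
          + 13760*y^7 + 3440*y^8)/(25200*y^5*(y+1)^5*(2*y+1)^4) := by
    field_simp
    ring
  nlinarith [div_nonneg (by positivity : (0:ℝ) ≤ 63 + 819*y + 4592*y^2 + 14336*y^3 + 27583*y^4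
      + 34130*y^5 + 27430*y^6 + 13760*y^7 + 3440*y^8)
    (by positivity : (0:ℝ) ≤ 25200*y^5*(y+1)^5*(2*y+1)^4), key]

noncomputable def xx (n : ℕ) : ℝ := ((1:ℝ) / (2 * (n+1 : ℕ) + 1)) ^ 2

lemma xx_pos (n : ℕ) : 0 < xx n := by unfold xx; positivity

lemma xx_lt_one (n : ℕ) : xx n < 1 := by
  unfold xx
  rw [div_pow, one_pow]
  rw [div_lt_one (by positivity)]
  have : (1:ℝ) ≤ (n+1:ℕ) := by exact_mod_cast Nat.one_le_iff_ne_zero.mpr (Nat.succ_ne_zero n)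
  nlinarith

lemma hsum2 (n : ℕ) : ∑ i ∈ range 2, (1:ℝ) / (2 * ((i+1) : ℕ) + 1) * (xx n) ^ (i+1)
      = xx n/3 + (xx n)^2/5 := by
  simp [Finset.sum_range_succ]
  norm_num
  ring

lemma diff_lower (n : ℕ) :
    xx n / 3 + (xx n)^2 / 5 ≤ log (stirlingSeq (n+1)) - log (stirlingSeq (n+2)) := by
  have h := Stirling.log_stirlingSeq_diff_hasSum n
  have h0 := sum_le_hasSum (range 2) (fun i _ => by positivity) h
  rw [show (fun k : ℕ => (1:ℝ) / (2 * ((k+1) : ℕ) + 1) * ((1 / (2 * ((n+1):ℕ) + 1)) ^ 2) ^ (k+1))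
      = (fun k : ℕ => (1:ℝ) / (2 * ((k+1) : ℕ) + 1) * (xx n) ^ (k+1)) from rfl] at h0
  rwa [hsum2 n] at h0

lemma diff_upper (n : ℕ) :
    log (stirlingSeq (n+1)) - log (stirlingSeq (n+2))
      ≤ xx n / 3 + (xx n)^2 / 5 + (xx n)^3 / (7 * (1 - xx n)) := by
  have h := Stirling.log_stirlingSeq_diff_hasSum n
  set S := log (stirlingSeq (n+1)) - log (stirlingSeq (n+2)) with hS
  have h2 : HasSum (fun k : ℕ => (1:ℝ) / (2 * ((k+2)+1 : ℕ) + 1) * (xx n) ^ ((k+2)+1))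
      (S - ∑ i ∈ range 2, (1:ℝ) / (2 * ((i+1) : ℕ) + 1) * (xx n) ^ (i+1)) := by
    exact (hasSum_nat_add_iff' 2).mpr h
  have hgeo : HasSum (fun k : ℕ => (xx n)^3/7 * (xx n) ^ k) ((xx n)^3/7 * (1 - xx n)⁻¹) :=
    (hasSum_geometric_of_lt_one (xx_pos n).le (xx_lt_one n)).mul_left _
  have hle : S - ∑ i ∈ range 2, (1:ℝ) / (2 * ((i+1) : ℕ) + 1) * (xx n) ^ (i+1)
      ≤ (xx n)^3/7 * (1 - xx n)⁻¹ := by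
    refine hasSum_le (fun k => ?_) h2 hgeo
    have hxp : (0:ℝ) ≤ (xx n) ^ (k+3) := pow_nonneg (xx_pos n).le _
    have hc : ((1:ℝ) / (2 * ((k+2)+1 : ℕ) + 1)) ≤ 1/7 := by
      apply div_le_div_of_nonneg_left one_pos.le (by norm_num)
      push_cast; linarith [Nat.cast_nonneg (α := ℝ) k]
    calc (1:ℝ) / (2 * ((k+2)+1 : ℕ) + 1) * (xx n) ^ ((k+2)+1) ≤ 1/7 * (xx n)^(k+3) := by
          apply mul_le_mul_of_nonneg_right hc hxp
      _ = (xx n)^3/7 * (xx n)^k := by ring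
  rw [hsum2 n] at hle
  have h1x : (0:ℝ) < 1 - xx n := by linarith [xx_lt_one n]
  have heq : (xx n)^3/7 * (1- xx n)⁻¹ = (xx n)^3/(7*(1- xx n)) := by
    field_simp
  linarith [hle.trans_eq heq]

noncomputable def gg (k : ℕ) : ℝ := 1/(12*k) - 1/(360*(k:ℝ)^3)
noncomputable def GG (k : ℕ) : ℝ := 1/(12*k) - 1/(360*(k:ℝ)^3) + 1/(400*(k:ℝ)^5)

lemma tendsto_nat_aux (n : ℕ) : Tendsto (fun p : ℕ => n+1+p) atTop atTop := by
  have h := tendsto_add_atTop_nat (n+1)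
  have e : (fun p : ℕ => n+1+p) = (fun p : ℕ => p + (n+1)) := by funext p; omega
  rw [e]; exact h

lemma tendsto_pow_inv_aux (n j : ℕ) (c : ℝ) (hc : 0 < c) (hj : j ≠ 0) :
    Tendsto (fun p : ℕ => 1/(c*((n+1+p:ℕ):ℝ)^j)) atTop (𝓝 0) := by
  have hb : Tendsto (fun p : ℕ => ((n+1+p : ℕ):ℝ)) atTop atTop :=
    tendsto_natCast_atTop_atTop.comp (tendsto_nat_aux n)
  have h := (((tendsto_pow_atTop hj).comp hb).const_mul_atTop hc).inv_tendsto_atTop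
  exact Tendsto.congr (fun p => by simp [Pi.inv_apply, one_div, Function.comp]) h

lemma tendsto_GG (n : ℕ) : Tendsto (fun p : ℕ => GG (n+1+p)) atTop (𝓝 0) := by
  have h1 := tendsto_pow_inv_aux n 1 12 (by norm_num) one_ne_zero
  have h3 := tendsto_pow_inv_aux n 3 360 (by norm_num) (by norm_num)
  have h5 := tendsto_pow_inv_aux n 5 400 (by norm_num) (by norm_num)
  simp only [pow_one] at h1
  simpa [GG] using (h1.sub h3).add h5

lemma tendsto_gg (n : ℕ) : Tendsto (fun p : ℕ => gg (n+1+p)) atTop (𝓝 0) := by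
  have h1 := tendsto_pow_inv_aux n 1 12 (by norm_num) one_ne_zero
  have h3 := tendsto_pow_inv_aux n 3 360 (by norm_num) (by norm_num)
  simp only [pow_one] at h1
  simpa [gg] using h1.sub h3

lemma tendsto_logs (n : ℕ) :
    Tendsto (fun p : ℕ => log (stirlingSeq (n+1+p))) atTop (𝓝 (log (√π))) := by
  have hπ : (0:ℝ) < √π := Real.sqrt_pos.mpr Real.pi_pos
  exact ((Real.continuousAt_log hπ.ne').tendsto).comp
    (Stirling.tendsto_stirlingSeq_sqrt_pi.comp (tendsto_nat_aux n))


lemma casts_aux (k : ℕ) : (1:ℝ) ≤ ((k+1 : ℕ):ℝ) := by exact_mod_cast Nat.one_le_iff_ne_zero.mpr (Nat.succ_ne_zero k)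

lemma perterm_lower (k : ℕ) :
    gg (k+1) - gg (k+2) ≤ log (stirlingSeq (k+1)) - log (stirlingSeq (k+2)) := by
  refine le_trans ?_ (diff_lower k)
  have h := polyL ((k+1:ℕ):ℝ) (casts_aux k)
  have e1 : ((k+1:ℕ):ℝ) + 1 = ((k+2:ℕ):ℝ) := by push_cast; ring
  rw [e1] at h
  unfold gg xx
  exact h

lemma perterm_upper (k : ℕ) :
    log (stirlingSeq (k+1)) - log (stirlingSeq (k+2)) ≤ GG (k+1) - GG (k+2) := by
  refine le_trans (diff_upper k) ?_
  have h := polyU ((k+1:ℕ):ℝ) (casts_aux k)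
  have e1 : ((k+1:ℕ):ℝ) + 1 = ((k+2:ℕ):ℝ) := by push_cast; ring
  rw [e1] at h
  unfold GG xx
  exact h

lemma tele_lower (n : ℕ) : ∀ p : ℕ,
    gg (n+1) - gg (n+1+p) ≤ log (stirlingSeq (n+1)) - log (stirlingSeq (n+1+p)) := by
  intro p
  induction p with
  | zero => simp
  | succ p ih =>
    have h := perterm_lower (n+p)
    have e1 : n+p+1 = n+1+p := by omega
    have e2 : n+p+2 = n+1+(p+1) := by omega
    rw [e1, e2] at h
    linarith

lemma tele_upper (n : ℕ) : ∀ p : ℕ,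
    log (stirlingSeq (n+1)) - log (stirlingSeq (n+1+p)) ≤ GG (n+1) - GG (n+1+p) := by
  intro p
  induction p with
  | zero => simp
  | succ p ih =>
    have h := perterm_upper (n+p)
    have e1 : n+p+1 = n+1+p := by omega
    have e2 : n+p+2 = n+1+(p+1) := by omega
    rw [e1, e2] at h
    linarith

lemma stirling_log_lower (n : ℕ) : log (√π) + gg (n+1) ≤ log (stirlingSeq (n+1)) := by
  have hA : Tendsto (fun p : ℕ => gg (n+1) - gg (n+1+p)) atTop (𝓝 (gg (n+1) - 0)) :=
    tendsto_const_nhds.sub (tendsto_gg n)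
  have hB : Tendsto (fun p : ℕ => log (stirlingSeq (n+1)) - log (stirlingSeq (n+1+p))) atTop
      (𝓝 (log (stirlingSeq (n+1)) - log (√π))) := tendsto_const_nhds.sub (tendsto_logs n)
  have := le_of_tendsto_of_tendsto' hA hB (tele_lower n)
  linarith

lemma stirling_log_upper (n : ℕ) : log (stirlingSeq (n+1)) ≤ log (√π) + GG (n+1) := by
  have hA : Tendsto (fun p : ℕ => log (stirlingSeq (n+1)) - log (stirlingSeq (n+1+p))) atTop
      (𝓝 (log (stirlingSeq (n+1)) - log (√π))) := tendsto_const_nhds.sub (tendsto_logs n)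
  have hB : Tendsto (fun p : ℕ => GG (n+1) - GG (n+1+p)) atTop (𝓝 (GG (n+1) - 0)) :=
    tendsto_const_nhds.sub (tendsto_GG n)
  have := le_of_tendsto_of_tendsto' hA hB (tele_upper n)
  linarith

lemma expo_real (A B ν : ℝ) (hA : 1 ≤ A) (hB : 1 ≤ B) (hν : 1 ≤ ν)
    (hcase : (A = 1 ∧ B = 1) ∨ 3 ≤ A + B) :
    -1/(8*ν) < (1/(12*((A+B)*ν)) - 1/(360*((A+B)*ν)^3))
      - (1/(12*(A*ν)) - 1/(360*(A*ν)^3) + 1/(400*(A*ν)^5))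
      - (1/(12*(B*ν)) - 1/(360*(B*ν)^3) + 1/(400*(B*ν)^5)) := by
  have hν0 : 0 < ν := by linarith
  have hA0 : 0 < A := by linarith
  have hB0 : 0 < B := by linarith
  rcases hcase with ⟨rfl, rfl⟩ | hS3
  · have key : ((1/(12*((1+1)*ν)) - 1/(360*((1+1)*ν)^3))
        - (1/(12*(1*ν)) - 1/(360*(1*ν)^3) + 1/(400*(1*ν)^5))
        - (1/(12*(1*ν)) - 1/(360*(1*ν)^3) + 1/(400*(1*ν)^5))) - (-1/(8*ν))
        = (200*ν^2 - 192)/(38400*ν^5) := by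
      field_simp
      ring
    have hnum : (0:ℝ) < 200*ν^2 - 192 := by nlinarith
    have := div_pos hnum (by positivity : (0:ℝ) < 38400*ν^5)
    linarith [key ▸ this]
  · have hS0 : (0:ℝ) < A + B := by linarith
    have hSle : 1/(12*(A*ν)) + 1/(12*(B*ν)) - 1/(12*((A+B)*ν)) ≤ 7/(72*ν) := by
      have hnum : (0:ℝ) ≤ 7*A*B*(A+B) - 6*(A+B)^2 + 6*A*B := by
        nlinarith [mul_nonneg (sub_nonneg.2 hA) (sub_nonneg.2 hB), sq_nonneg (A+B-3),
          mul_nonneg (mul_nonneg (sub_nonneg.2 hA) (sub_nonneg.2 hB)) hS0.le]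
      have key : 7/(72*ν) - (1/(12*(A*ν)) + 1/(12*(B*ν)) - 1/(12*((A+B)*ν)))
          = (7*A*B*(A+B) - 6*(A+B)^2 + 6*A*B)/(72*A*B*(A+B)*ν) := by
        field_simp
        ring
      have := div_nonneg hnum (by positivity : (0:ℝ) ≤ 72*A*B*(A+B)*ν)
      rw [← key] at this
      linarith
    have h360 : 1/(360*((A+B)*ν)^3) ≤ 1/(9720*ν) := by
      rw [div_le_div_iff₀ (by positivity) (by positivity)]
      have h27 : (27:ℝ) ≤ (A+B)^3 := by
        have := pow_le_pow_left₀ (by norm_num : (0:ℝ) ≤ 3) hS3 3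
        norm_num at this; linarith
      have hν3 : ν ≤ ν^3 := le_self_pow₀ hν (by norm_num)
      nlinarith [mul_le_mul h27 hν3 hν0.le (by positivity : (0:ℝ) ≤ (A+B)^3)]
    have h400A : 1/(400*(A*ν)^5) ≤ 1/(400*ν) := by
      rw [div_le_div_iff₀ (by positivity) (by positivity)]
      have h5 : 1 ≤ A^5 := one_le_pow₀ hA
      have hν5 : ν ≤ ν^5 := le_self_pow₀ hν (by norm_num)
      nlinarith [mul_le_mul h5 hν5 hν0.le (by positivity : (0:ℝ) ≤ A^5)]
    have h400B : 1/(400*(B*ν)^5) ≤ 1/(400*ν) := by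
      rw [div_le_div_iff₀ (by positivity) (by positivity)]
      have h5 : 1 ≤ B^5 := one_le_pow₀ hB
      have hν5 : ν ≤ ν^5 := le_self_pow₀ hν (by norm_num)
      nlinarith [mul_le_mul h5 hν5 hν0.le (by positivity : (0:ℝ) ≤ B^5)]
    have hposA : (0:ℝ) ≤ 1/(360*(A*ν)^3) := by positivity
    have hposB : (0:ℝ) ≤ 1/(360*(B*ν)^3) := by positivity
    have hinv : (0:ℝ) < ν⁻¹ := by positivity
    have e1 : (7:ℝ)/(72*ν) = (7/72)*ν⁻¹ := by rw [← div_eq_mul_inv, div_div]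
    have e2 : (1:ℝ)/(9720*ν) = (1/9720)*ν⁻¹ := by rw [← div_eq_mul_inv, div_div]
    have e3 : (1:ℝ)/(400*ν) = (1/400)*ν⁻¹ := by rw [← div_eq_mul_inv, div_div]
    have e4 : (-1:ℝ)/(8*ν) = (-1/8)*ν⁻¹ := by rw [← div_eq_mul_inv, div_div]
    rw [e4]
    rw [e1] at hSle
    rw [e2] at h360
    rw [e3] at h400A h400B
    linarith


lemma canon (k : ℕ) (hk : 0 < k) (c : ℝ) :
    √(2*(k:ℝ)) * (((k:ℝ)/Real.exp 1)^k) * (√π * Real.exp c)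
      = √(2*π) * Real.exp (c - k) * (k:ℝ)^((k:ℝ)+1/2) := by
  have hk0 : (0:ℝ) < k := by exact_mod_cast hk
  rw [Real.rpow_add hk0, Real.rpow_natCast, ← Real.sqrt_eq_rpow,
    Real.sqrt_mul (by norm_num : (0:ℝ) ≤ 2) (k:ℝ),
    Real.sqrt_mul (by norm_num : (0:ℝ) ≤ 2) π,
    Real.exp_sub, div_pow, ← Real.exp_one_pow]
  have h1 : Real.exp 1 ^ k ≠ 0 := by positivity
  field_simp

lemma fact_lower (n : ℕ) (hn : 0 < n) :
    √(2*π) * Real.exp (gg n - n) * (n:ℝ)^((n:ℝ)+1/2) ≤ (n ! : ℝ) := by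
  obtain ⟨k, rfl⟩ := Nat.exists_eq_succ_of_ne_zero hn.ne'
  have hD : (0:ℝ) < √(2*((k+1:ℕ):ℝ)) * ((((k+1:ℕ):ℝ))/Real.exp 1)^(k+1) := by positivity
  have hs : 0 < stirlingSeq (k+1) := stirlingSeq'_pos k
  have hfact : ((k+1)! : ℝ) = stirlingSeq (k+1) *
      (√(2*((k+1:ℕ):ℝ)) * ((((k+1:ℕ):ℝ))/Real.exp 1)^(k+1)) := by
    rw [stirlingSeq]
    field_simp
  have hsge : √π * Real.exp (gg (k+1)) ≤ stirlingSeq (k+1) := by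
    have h := stirling_log_lower k
    have := Real.exp_le_exp.2 h
    rwa [Real.exp_add, Real.exp_log (Real.sqrt_pos.2 Real.pi_pos), Real.exp_log hs] at this
  calc √(2*π) * Real.exp (gg (k+1) - (k+1:ℕ)) * ((k+1:ℕ):ℝ)^(((k+1:ℕ):ℝ)+1/2)
      = √(2*((k+1:ℕ):ℝ)) * ((((k+1:ℕ):ℝ))/Real.exp 1)^(k+1) * (√π * Real.exp (gg (k+1))) := by
        rw [canon (k+1) (Nat.succ_pos k)]
    _ ≤ √(2*((k+1:ℕ):ℝ)) * ((((k+1:ℕ):ℝ))/Real.exp 1)^(k+1) * stirlingSeq (k+1) := by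
        exact mul_le_mul_of_nonneg_left hsge hD.le
    _ = ((k+1)! : ℝ) := by rw [hfact]; ring

lemma fact_upper (n : ℕ) (hn : 0 < n) :
    (n ! : ℝ) ≤ √(2*π) * Real.exp (GG n - n) * (n:ℝ)^((n:ℝ)+1/2) := by
  obtain ⟨k, rfl⟩ := Nat.exists_eq_succ_of_ne_zero hn.ne'
  have hD : (0:ℝ) < √(2*((k+1:ℕ):ℝ)) * ((((k+1:ℕ):ℝ))/Real.exp 1)^(k+1) := by positivity
  have hs : 0 < stirlingSeq (k+1) := stirlingSeq'_pos k
  have hfact : ((k+1)! : ℝ) = stirlingSeq (k+1) *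
      (√(2*((k+1:ℕ):ℝ)) * ((((k+1:ℕ):ℝ))/Real.exp 1)^(k+1)) := by
    rw [stirlingSeq]
    field_simp
  have hsle : stirlingSeq (k+1) ≤ √π * Real.exp (GG (k+1)) := by
    have h := stirling_log_upper k
    have := Real.exp_le_exp.2 h
    rwa [Real.exp_add, Real.exp_log (Real.sqrt_pos.2 Real.pi_pos), Real.exp_log hs] at this
  calc ((k+1)! : ℝ) = √(2*((k+1:ℕ):ℝ)) * ((((k+1:ℕ):ℝ))/Real.exp 1)^(k+1) * stirlingSeq (k+1) := by
        rw [hfact]; ring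
    _ ≤ √(2*((k+1:ℕ):ℝ)) * ((((k+1:ℕ):ℝ))/Real.exp 1)^(k+1) * (√π * Real.exp (GG (k+1))) :=
        mul_le_mul_of_nonneg_left hsle hD.le
    _ = √(2*π) * Real.exp (GG (k+1) - (k+1:ℕ)) * ((k+1:ℕ):ℝ)^(((k+1:ℕ):ℝ)+1/2) := by
        rw [canon (k+1) (Nat.succ_pos k)]


open Real in
theorem stmt_18 (m n r : ℕ) (hn : 0 < n) (hr : 1 ≤ r) (hmr : m > r) :
    (Nat.choose (m * n) (r * n) : ℝ) >
      (1 / Real.sqrt (2 * Real.pi)) * Real.exp (-1 / (8 * n)) * (n : ℝ) ^ (-(1 : ℝ) / 2) *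
        (m : ℝ) ^ ((m * n : ℝ) + 1 / 2) /
        (((m : ℝ) - r) ^ (((m : ℝ) - r) * n + 1 / 2) * (r : ℝ) ^ ((r * n : ℝ) + 1 / 2)) := by
  -- setup
  set s : ℕ := m - r with hs_def
  have hm : m = r + s := by omega
  have hs1 : 1 ≤ s := by omega
  set R : ℝ := (r:ℝ) with hR
  set S : ℝ := (s:ℝ) with hS
  set ν : ℝ := (n:ℝ) with hν
  have hν1 : (1:ℝ) ≤ ν := by rw [hν]; exact_mod_cast hn
  have hR1 : (1:ℝ) ≤ R := by rw [hR]; exact_mod_cast hr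
  have hS1 : (1:ℝ) ≤ S := by rw [hS]; exact_mod_cast hs1
  have hν0 : (0:ℝ) < ν := by linarith
  have hR0 : (0:ℝ) < R := by linarith
  have hS0 : (0:ℝ) < S := by linarith
  have hMRS : (m:ℝ) = R + S := by rw [hm]; push_cast; ring
  have hMsub : (m:ℝ) - (r:ℝ) = S := by rw [hMRS]; ring
  -- the three indices
  have ha0 : 0 < r * n := Nat.mul_pos (by omega) hn
  have hb0 : 0 < s * n := Nat.mul_pos (by omega) hn
  have hN0 : 0 < m * n := Nat.mul_pos (by omega) hn
  have hab : m * n = r * n + s * n := by rw [hm]; ring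
  have hcast_a : ((r*n : ℕ):ℝ) = R * ν := by push_cast; ring
  have hcast_b : ((s*n : ℕ):ℝ) = S * ν := by push_cast; ring
  have hcast_N : ((m*n : ℕ):ℝ) = (R + S) * ν := by rw [hm]; push_cast; ring
  -- exponent inequality
  have hE : -1/(8*ν) < gg (m*n) - GG (r*n) - GG (s*n) := by
    have h := expo_real R S ν hR1 hS1 hν1 ?_
    · unfold gg GG
      rw [hcast_a, hcast_b, hcast_N]
      exact h
    · rcases Nat.lt_or_ge m 3 with hm3 | hm3
      · left
        have : r = 1 ∧ s = 1 := by omega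
        constructor <;> simp [hR, hS, this.1, this.2]
      · right
        rw [← hMRS]; exact_mod_cast hm3
  -- factorial bounds
  have hfl := fact_lower (m*n) hN0
  have hfuA := fact_upper (r*n) ha0
  have hfuB := fact_upper (s*n) hb0
  -- choose as ratio
  have hchoose : ((m*n).choose (r*n) : ℝ) = ((m*n)! : ℝ) / (((r*n)! : ℝ) * ((s*n)! : ℝ)) := by
    rw [Nat.cast_choose ℝ (by rw [hab]; omega), show m*n - r*n = s*n from by rw [hab]; omega]
  -- positivity facts
  have hQA : (0:ℝ) < √(2*π) * Real.exp (GG (r*n) - (r*n:ℕ)) * ((r*n:ℕ):ℝ)^(((r*n:ℕ):ℝ)+1/2) := by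
    have : (0:ℝ) < ((r*n:ℕ):ℝ) := by exact_mod_cast ha0
    positivity
  have hQB : (0:ℝ) < √(2*π) * Real.exp (GG (s*n) - (s*n:ℕ)) * ((s*n:ℕ):ℝ)^(((s*n:ℕ):ℝ)+1/2) := by
    have : (0:ℝ) < ((s*n:ℕ):ℝ) := by exact_mod_cast hb0
    positivity
  have hfa : (0:ℝ) < ((r*n)! : ℝ) := by exact_mod_cast (r*n).factorial_pos
  have hfb : (0:ℝ) < ((s*n)! : ℝ) := by exact_mod_cast (s*n).factorial_pos
  -- the ratio bound
  have hratio : (√(2*π) * Real.exp (gg (m*n) - (m*n:ℕ)) * ((m*n:ℕ):ℝ)^(((m*n:ℕ):ℝ)+1/2)) /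
      ((√(2*π) * Real.exp (GG (r*n) - (r*n:ℕ)) * ((r*n:ℕ):ℝ)^(((r*n:ℕ):ℝ)+1/2)) *
       (√(2*π) * Real.exp (GG (s*n) - (s*n:ℕ)) * ((s*n:ℕ):ℝ)^(((s*n:ℕ):ℝ)+1/2)))
      ≤ ((m*n).choose (r*n) : ℝ) := by
    rw [hchoose]
    exact div_le_div₀ (by positivity) hfl (by positivity)
      (mul_le_mul hfuA hfuB hfb.le hQA.le)
  -- rewrite the big ratio in target form
  have hrpow_a : ((r*n:ℕ):ℝ)^(((r*n:ℕ):ℝ)+1/2) = R^(R*ν+1/2) * ν^(R*ν+1/2) := by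
    rw [hcast_a, Real.mul_rpow hR0.le hν0.le]
  have hrpow_b : ((s*n:ℕ):ℝ)^(((s*n:ℕ):ℝ)+1/2) = S^(S*ν+1/2) * ν^(S*ν+1/2) := by
    rw [hcast_b, Real.mul_rpow hS0.le hν0.le]
  have hrpow_N : ((m*n:ℕ):ℝ)^(((m*n:ℕ):ℝ)+1/2)
      = ((R+S):ℝ)^((R+S)*ν+1/2) * ν^((R+S)*ν+1/2) := by
    rw [hcast_N, Real.mul_rpow (by linarith) hν0.le]
  have hν_split : ν^((R+S)*ν+1/2) = ν^(R*ν+1/2) * ν^(S*ν+1/2) * ν^(-(1:ℝ)/2) := by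
    rw [← Real.rpow_add hν0, ← Real.rpow_add hν0]
    congr 1
    ring
  have hexp_split : Real.exp (gg (m*n) - (m*n:ℕ)) =
      Real.exp (GG (r*n) - (r*n:ℕ)) * Real.exp (GG (s*n) - (s*n:ℕ)) *
      Real.exp (gg (m*n) - GG (r*n) - GG (s*n)) := by
    rw [← Real.exp_add, ← Real.exp_add]
    congr 1
    have : ((m*n:ℕ):ℝ) = ((r*n:ℕ):ℝ) + ((s*n:ℕ):ℝ) := by rw [hab]; push_cast; ring
    rw [this]; ring
  -- target's powers
  have htgt_m : (m:ℝ) ^ ((m * n : ℝ) + 1 / 2) = ((R+S):ℝ)^((R+S)*ν+1/2) := by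
    rw [hMRS]
  have htgt_s : ((m:ℝ) - r) ^ (((m:ℝ) - r) * (n:ℝ) + 1 / 2) = S^(S*ν+1/2) := by
    rw [hMsub]
  -- positivity of rpow pieces
  have p1 : (0:ℝ) < R^(R*ν+1/2) := Real.rpow_pos_of_pos hR0 _
  have p2 : (0:ℝ) < S^(S*ν+1/2) := Real.rpow_pos_of_pos hS0 _
  have p3 : (0:ℝ) < ν^(R*ν+1/2) := Real.rpow_pos_of_pos hν0 _
  have p4 : (0:ℝ) < ν^(S*ν+1/2) := Real.rpow_pos_of_pos hν0 _
  have p5 : (0:ℝ) < ν^(-(1:ℝ)/2) := Real.rpow_pos_of_pos hν0 _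
  have p6 : (0:ℝ) < (R+S)^((R+S)*ν+1/2) := Real.rpow_pos_of_pos (by linarith) _
  have hsqrt2pi : (0:ℝ) < √(2*π) := Real.sqrt_pos.2 (by positivity)
  -- the main equality
  have hmain : (√(2*π) * Real.exp (gg (m*n) - (m*n:ℕ)) * ((m*n:ℕ):ℝ)^(((m*n:ℕ):ℝ)+1/2)) /
      ((√(2*π) * Real.exp (GG (r*n) - (r*n:ℕ)) * ((r*n:ℕ):ℝ)^(((r*n:ℕ):ℝ)+1/2)) *
       (√(2*π) * Real.exp (GG (s*n) - (s*n:ℕ)) * ((s*n:ℕ):ℝ)^(((s*n:ℕ):ℝ)+1/2)))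
      = Real.exp (gg (m*n) - GG (r*n) - GG (s*n)) *
        ((1 / √(2*π)) * ν^(-(1:ℝ)/2) * ((R+S):ℝ)^((R+S)*ν+1/2) / (S^(S*ν+1/2) * R^(R*ν+1/2))) := by
    rw [hrpow_a, hrpow_b, hrpow_N, hν_split, hexp_split]
    have e1 : Real.exp (GG (r*n) - (r*n:ℕ)) ≠ 0 := (Real.exp_pos _).ne'
    have e2 : Real.exp (GG (s*n) - (s*n:ℕ)) ≠ 0 := (Real.exp_pos _).ne'
    field_simp
  -- the strict inequality on the coefficient
  have hQpos : (0:ℝ) < (1 / √(2*π)) * ν^(-(1:ℝ)/2) * ((R+S):ℝ)^((R+S)*ν+1/2) /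
      (S^(S*ν+1/2) * R^(R*ν+1/2)) := by positivity
  have hstrict : (1 / √(2*π)) * Real.exp (-1 / (8*ν)) * ν^(-(1:ℝ)/2) *
        ((R+S):ℝ)^((R+S)*ν+1/2) / (S^(S*ν+1/2) * R^(R*ν+1/2))
      < Real.exp (gg (m*n) - GG (r*n) - GG (s*n)) *
        ((1 / √(2*π)) * ν^(-(1:ℝ)/2) * ((R+S):ℝ)^((R+S)*ν+1/2) / (S^(S*ν+1/2) * R^(R*ν+1/2))) := by
    have h1 : (1 / √(2*π)) * Real.exp (-1 / (8*ν)) * ν^(-(1:ℝ)/2) *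
        ((R+S):ℝ)^((R+S)*ν+1/2) / (S^(S*ν+1/2) * R^(R*ν+1/2))
        = Real.exp (-1 / (8*ν)) *
        ((1 / √(2*π)) * ν^(-(1:ℝ)/2) * ((R+S):ℝ)^((R+S)*ν+1/2) / (S^(S*ν+1/2) * R^(R*ν+1/2))) := by
      ring
    rw [h1]
    exact mul_lt_mul_of_pos_right (Real.exp_lt_exp.2 hE) hQpos
  -- finish
  rw [GT.gt]
  calc (1 / √(2*π)) * Real.exp (-1 / (8*(n:ℝ))) * (n:ℝ)^(-(1:ℝ)/2) *
        (m:ℝ)^((m*n:ℝ)+1/2) / (((m:ℝ)-r)^(((m:ℝ)-r)*n+1/2) * (r:ℝ)^((r*n:ℝ)+1/2))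
      = (1 / √(2*π)) * Real.exp (-1 / (8*ν)) * ν^(-(1:ℝ)/2) *
        ((R+S):ℝ)^((R+S)*ν+1/2) / (S^(S*ν+1/2) * R^(R*ν+1/2)) := by
        rw [htgt_m, htgt_s]
    _ < Real.exp (gg (m*n) - GG (r*n) - GG (s*n)) *
        ((1 / √(2*π)) * ν^(-(1:ℝ)/2) * ((R+S):ℝ)^((R+S)*ν+1/2) / (S^(S*ν+1/2) * R^(R*ν+1/2))) :=
        hstrict
    _ = (√(2*π) * Real.exp (gg (m*n) - (m*n:ℕ)) * ((m*n:ℕ):ℝ)^(((m*n:ℕ):ℝ)+1/2)) /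
      ((√(2*π) * Real.exp (GG (r*n) - (r*n:ℕ)) * ((r*n:ℕ):ℝ)^(((r*n:ℕ):ℝ)+1/2)) *
       (√(2*π) * Real.exp (GG (s*n) - (s*n:ℕ)) * ((s*n:ℕ):ℝ)^(((s*n:ℕ):ℝ)+1/2))) := hmain.symm
    _ ≤ ((m*n).choose (r*n) : ℝ) := hratio
end
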